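/- arXiv:2211.04776 — 13 statements merged into one kernel-verified Lean document; each statement's English description precedes it below -/
import Mathlib

section
/- Assume the family is minimal: for every nonzero v ∈ H, the function x ↦ ⟨v, Γ(x)⟩ is not ν-almost-everywhere equal to a constant. Then the log-partition function A is strictly convex on Θ: for all θ, θ' ∈ Θ with θ ≠ θ' and all t ∈ (0,1), A(tθ + (1−t)θ') < t A(θ) + (1−t) A(θ'). -/
/-!
Normalize `exp u` and `exp v` to probability densities. Pointwise strict convexity of `exp`
gives `exp (t u + (1 - t) v) ≤ t exp u + (1 - t) exp v`, with equality exactly where `u = v`;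
integrating, `∫ exp (t u + (1 - t) v) < 1` after normalization unless the normalized exponents
agree a.e., i.e. unless `u - v` is a.e. constant. Minimality excludes this for
`u = ⟪θ, Γ⟫`, `v = ⟪θ', Γ⟫`.
-/

open MeasureTheory Real
open scoped RealInnerProductSpace

section LogIntegralExp

variable {X : Type*} [MeasurableSpace X] {μ : Measure X} {u v : X → ℝ} {t : ℝ}

lemma exp_convexComb_le (ht : t ∈ Set.Icc (0 : ℝ) 1) (a b : ℝ) :
    exp (t * a + (1 - t) * b) ≤ t * exp a + (1 - t) * exp b :=
  convexOn_exp.2 (Set.mem_univ _) (Set.mem_univ _) ht.1 (sub_nonneg.2 ht.2) (by ring)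

lemma integrable_exp_convexComb (hu : Integrable (fun x => exp (u x)) μ)
    (hv : Integrable (fun x => exp (v x)) μ) (ht : t ∈ Set.Icc (0 : ℝ) 1) :
    Integrable (fun x => exp (t * u x + (1 - t) * v x)) μ := by
  have hu_meas : AEMeasurable u μ := by
    simpa only [log_exp] using hu.aemeasurable.log
  have hv_meas : AEMeasurable v μ := by
    simpa only [log_exp] using hv.aemeasurable.log
  have hsum : Integrable (fun x => t * exp (u x) + (1 - t) * exp (v x)) μ :=
    (hu.const_mul t).add (hv.const_mul (1 - t))
  refine hsum.mono'
    ((hu_meas.const_mul t).add (hv_meas.const_mul (1 - t))).exp.aestronglyMeasurable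
    (ae_of_all _ fun x => ?_)
  rw [norm_of_nonneg (exp_pos _).le]
  exact exp_convexComb_le ht _ _

lemma integral_exp_convexComb_lt (hu : Integrable (fun x => exp (u x)) μ)
    (hv : Integrable (fun x => exp (v x)) μ) (huv : ¬ u =ᵐ[μ] v) (ht : t ∈ Set.Ioo (0 : ℝ) 1) :
    ∫ x, exp (t * u x + (1 - t) * v x) ∂μ
      < t * ∫ x, exp (u x) ∂μ + (1 - t) * ∫ x, exp (v x) ∂μ := by
  obtain ⟨ht0, ht1⟩ := ht
  have hw := integrable_exp_convexComb hu hv ⟨ht0.le, ht1.le⟩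
  have hsum : Integrable (fun x => t * exp (u x) + (1 - t) * exp (v x)) μ :=
    (hu.const_mul t).add (hv.const_mul (1 - t))
  set gap : X → ℝ := fun x =>
    t * exp (u x) + (1 - t) * exp (v x) - exp (t * u x + (1 - t) * v x)
  have gap_int : Integrable gap μ := hsum.sub hw
  have gap_nonneg : 0 ≤ gap := fun x => sub_nonneg.2 <| exp_convexComb_le ⟨ht0.le, ht1.le⟩ _ _
  have gap_pos : ∀ x, u x ≠ v x → 0 < gap x := fun x hx => sub_pos.2 <|
    strictConvexOn_exp.2 (Set.mem_univ _) (Set.mem_univ _) hx ht0 (sub_pos.2 ht1) (by ring)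
  have hgap : 0 < ∫ x, gap x ∂μ := by
    refine lt_of_le_of_ne (integral_nonneg gap_nonneg) fun h0 => huv ?_
    filter_upwards [(integral_eq_zero_iff_of_nonneg gap_nonneg gap_int).1 h0.symm] with x hx
    by_contra hne
    exact (gap_pos x hne).ne' hx
  rw [integral_sub hsum hw, integral_add (hu.const_mul t) (hv.const_mul (1 - t)),
    integral_const_mul, integral_const_mul] at hgap
  linarith

lemma log_integral_exp_convexComb_lt (hu : Integrable (fun x => exp (u x)) μ)
    (hv : Integrable (fun x => exp (v x)) μ) (huv : ∀ c : ℝ, ¬ ∀ᵐ x ∂μ, u x - v x = c)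
    (ht : t ∈ Set.Ioo (0 : ℝ) 1) :
    log (∫ x, exp (t * u x + (1 - t) * v x) ∂μ)
      < t * log (∫ x, exp (u x) ∂μ) + (1 - t) * log (∫ x, exp (v x) ∂μ) := by
  have : NeZero μ := ⟨fun hμ => huv 0 (by simp [hμ])⟩
  set a := log (∫ x, exp (u x) ∂μ)
  set b := log (∫ x, exp (v x) ∂μ)
  have hexp_a : exp a = ∫ x, exp (u x) ∂μ := exp_log (integral_exp_pos hu)
  have hexp_b : exp b = ∫ x, exp (v x) ∂μ := exp_log (integral_exp_pos hv)
  have hnormalized : ∀ (w : X → ℝ) (c : ℝ), exp c = ∫ x, exp (w x) ∂μ →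
      ∫ x, exp (w x - c) ∂μ = 1 := fun w c hc => by
    simp_rw [exp_sub, integral_div, ← hc, div_self (exp_pos c).ne']
  have hlt := integral_exp_convexComb_lt (u := fun x => u x - a) (v := fun x => v x - b)
    (by simpa only [exp_sub] using hu.div_const (exp a))
    (by simpa only [exp_sub] using hv.div_const (exp b))
    (fun h => huv (a - b) (h.mono fun x hx => by linarith)) ht
  rw [hnormalized u a hexp_a, hnormalized v b hexp_b] at hlt
  have hshift : ∀ x, t * (u x - a) + (1 - t) * (v x - b)
      = (t * u x + (1 - t) * v x) - (t * a + (1 - t) * b) := fun x => by ring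
  simp_rw [hshift, exp_sub, integral_div] at hlt
  have hw_pos := integral_exp_pos (integrable_exp_convexComb hu hv ⟨ht.1.le, ht.2.le⟩)
  rw [div_lt_iff₀ (exp_pos _), show t * 1 + (1 - t) * 1 = 1 by ring, one_mul,
    ← exp_log hw_pos, exp_lt_exp] at hlt
  exact hlt

end LogIntegralExp

theorem statement1_general
    {X : Type*} [MeasurableSpace X] (ν : Measure X)
    {H : Type*} [NormedAddCommGroup H] [InnerProductSpace ℝ H]
    (Γ : X → H)
    (Θ : Set H) (hΘ : Θ = {θ : H | Integrable (fun x => exp ⟪θ, Γ x⟫) ν})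
    (A : H → ℝ) (hA : ∀ θ, A θ = log (∫ x, exp ⟪θ, Γ x⟫ ∂ν))
    (hmin : ∀ v : H, v ≠ 0 → ¬ ∃ c : ℝ, ∀ᵐ x ∂ν, ⟪v, Γ x⟫ = c) :
    ∀ θ ∈ Θ, ∀ θ' ∈ Θ, θ ≠ θ' → ∀ t ∈ Set.Ioo (0:ℝ) 1,
      A (t • θ + (1 - t) • θ') < t * A θ + (1 - t) * A θ' := by
  intro θ hθ θ' hθ' hne t ht
  rw [hΘ] at hθ hθ'
  have hnonconst : ∀ c : ℝ, ¬ ∀ᵐ x ∂ν, ⟪θ, Γ x⟫ - ⟪θ', Γ x⟫ = c := fun c hc =>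
    hmin (θ - θ') (sub_ne_zero.2 hne) ⟨c, by simpa only [inner_sub_left] using hc⟩
  simp_rw [hA, inner_add_left, real_inner_smul_left]
  exact log_integral_exp_convexComb_lt hθ hθ' hnonconst ht

/-- Under minimality of the exponential family (no nonzero `v` makes `x ↦ ⟪v, Γ x⟫`
ν-a.e. constant), the log-partition function `A` is strictly convex on `Θ`. -/
theorem statement1
    {X : Type*} [MeasurableSpace X] (ν : Measure X) [SigmaFinite ν] (hν : ν ≠ 0)
    {H : Type*} [NormedAddCommGroup H] [InnerProductSpace ℝ H] [FiniteDimensional ℝ H]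
    [MeasurableSpace H] [BorelSpace H]
    (Γ : X → H) (hΓ : Measurable Γ)
    (Θ : Set H) (hΘ : Θ = {θ : H | Integrable (fun x => exp ⟪θ, Γ x⟫) ν})
    (A : H → ℝ) (hA : ∀ θ, A θ = log (∫ x, exp ⟪θ, Γ x⟫ ∂ν))
    (hmin : ∀ v : H, v ≠ 0 → ¬ ∃ c : ℝ, ∀ᵐ x ∂ν, ⟪v, Γ x⟫ = c) :
    ∀ θ ∈ Θ, ∀ θ' ∈ Θ, θ ≠ θ' → ∀ t ∈ Set.Ioo (0:ℝ) 1,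
      A (t • θ + (1 - t) • θ') < t * A θ + (1 - t) * A θ' :=
  statement1_general ν Γ Θ hΘ A hA hmin
end

section
/- For every θ in the interior of Θ, the function x ↦ q_θ(x) Γ(x) is Bochner ν-integrable, and A has a gradient at θ equal to the exponential-family mean: HasGradientAt A (∫ q_θ(x) Γ(x) ν(dx)) θ. -/
open MeasureTheory Real
open scoped RealInnerProductSpace

/-!
Around an interior point `θ` of the integrability region there is a simplex inside the region
whose convex hull contains a closed ball `B(θ, r)`. Since `η ↦ exp ⟪η, v⟫` is convex, its maximum
`exp (⟪θ, v⟫ + r ‖v‖)` over the ball is at most the sum of its values at the vertices, so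
`exp (⟪θ, Γ⟫ + r ‖Γ‖)` is integrable. This dominates `‖Γ‖ exp ⟪η, Γ⟫` uniformly for `η` near `θ`,
so the partition function `Z` may be differentiated under the integral sign, with gradient
`∫ exp ⟪θ, Γ⟫ Γ dν`, and `A = log Z` has gradient `∇Z(θ) / Z(θ) = ∫ q_θ Γ dν`.
-/

open Metric Set

section InnerExp

variable {H : Type*} [NormedAddCommGroup H] [InnerProductSpace ℝ H]

lemma exists_inner_le_of_mem_convexHull {t : Set H} {p : H} (hp : p ∈ convexHull ℝ t) (v : H) :
    ∃ y ∈ t, ⟪p, v⟫ ≤ ⟪y, v⟫ := by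
  have hconv : ConvexOn ℝ univ (fun η : H => ⟪η, v⟫) := by
    simpa [real_inner_comm] using ((innerₛₗ ℝ v).convexOn convex_univ)
  exact hconv.exists_ge_of_mem_convexHull (subset_univ t) hp

lemma exp_inner_add_mul_norm_le_sum {ι : Type*} [Fintype ι] {b : ι → H} {θ : H} {r : ℝ}
    (hr : 0 ≤ r) (hb : closedBall θ r ⊆ convexHull ℝ (range b)) (v : H) :
    exp (⟪θ, v⟫ + r * ‖v‖) ≤ ∑ i, exp ⟪b i, v⟫ := by
  set p := θ + (r / ‖v‖) • v
  have hp_inner : ⟪p, v⟫ = ⟪θ, v⟫ + r * ‖v‖ := by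
    rcases eq_or_ne v 0 with rfl | hv
    · simp
    · simp [p, inner_add_left, real_inner_smul_left]
      field_simp
  have hp : p ∈ closedBall θ r := by
    rw [mem_closedBall, dist_eq_norm, add_sub_cancel_left, norm_smul, norm_div, norm_norm,
      Real.norm_of_nonneg hr]
    rcases eq_or_ne v 0 with rfl | hv
    · simpa using hr
    · rw [div_mul_cancel₀ _ (norm_ne_zero_iff.2 hv)]
  obtain ⟨_, ⟨i, rfl⟩, hi⟩ := exists_inner_le_of_mem_convexHull (hb hp) v
  rw [← hp_inner]
  exact (exp_le_exp.2 hi).trans <| Finset.single_le_sum (f := fun j => exp ⟪b j, v⟫)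
    (fun j _ => (exp_pos _).le) (Finset.mem_univ i)

lemma norm_mul_exp_inner_le {θ η : H} {r : ℝ} (hr : 0 < r) (hη : η ∈ ball θ (r / 2)) (v : H) :
    ‖v‖ * exp ⟪η, v⟫ ≤ 2 / r * exp (⟪θ, v⟫ + r * ‖v‖) := by
  have hnorm : ‖v‖ ≤ 2 / r * exp (r / 2 * ‖v‖) := by
    calc ‖v‖ = 2 / r * (r / 2 * ‖v‖) := by field_simp
      _ ≤ 2 / r * exp (r / 2 * ‖v‖) := by
          gcongr
          linarith [add_one_le_exp (r / 2 * ‖v‖)]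
  have hinner : ⟪η, v⟫ ≤ ⟪θ, v⟫ + r / 2 * ‖v‖ := by
    have h := real_inner_le_norm (η - θ) v
    rw [inner_sub_left] at h
    have := mul_le_mul_of_nonneg_right (mem_ball_iff_norm.1 hη).le (norm_nonneg v)
    linarith
  calc ‖v‖ * exp ⟪η, v⟫ ≤ 2 / r * exp (r / 2 * ‖v‖) * exp (⟪θ, v⟫ + r / 2 * ‖v‖) := by
        gcongr
    _ = 2 / r * exp (⟪θ, v⟫ + r * ‖v‖) := by
        rw [mul_assoc, ← exp_add]
        ring_nf

lemma hasFDerivAt_exp_inner (v η : H) :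
    HasFDerivAt (fun ζ : H => exp ⟪ζ, v⟫) (innerSL ℝ (exp ⟪η, v⟫ • v)) η := by
  rw [map_smul]
  simpa only [innerSL_apply_apply, real_inner_comm v] using
    ((innerSL ℝ v).hasFDerivAt (x := η)).exp

end InnerExp

section ExpFamily

variable {X H : Type*} [MeasurableSpace X] [NormedAddCommGroup H] [InnerProductSpace ℝ H]

def integrableExpInnerSet (Γ : X → H) (ν : Measure X) : Set H :=
  {θ | Integrable (fun x => exp ⟪θ, Γ x⟫) ν}

variable [FiniteDimensional ℝ H] [MeasurableSpace H] [BorelSpace H]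
  {ν : Measure X} {Γ : X → H} {θ : H}

lemma exists_integrable_exp_inner_add_mul_norm (hΓ : Measurable Γ)
    (hθ : θ ∈ interior (integrableExpInnerSet Γ ν)) :
    ∃ r > 0, Integrable (fun x => exp (⟪θ, Γ x⟫ + r * ‖Γ x‖)) ν := by
  obtain ⟨b, hθb, hbΘ⟩ := exists_mem_interior_convexHull_affineBasis (isOpen_interior.mem_nhds hθ)
  obtain ⟨r, hr, hball⟩ := Metric.mem_nhds_iff.1 (isOpen_interior.mem_nhds hθb)
  have hclosed : closedBall θ (r / 2) ⊆ convexHull ℝ (range b) :=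
    (closedBall_subset_ball (half_lt_self hr)).trans (hball.trans interior_subset)
  have hb_int (i) : b i ∈ integrableExpInnerSet Γ ν :=
    interior_subset (hbΘ (subset_convexHull ℝ _ ⟨i, rfl⟩))
  have hsum : Integrable (fun x => ∑ i, exp ⟪b i, Γ x⟫) ν :=
    integrable_finsetSum _ fun i _ => hb_int i
  refine ⟨r / 2, half_pos hr, hsum.mono' (by fun_prop) (ae_of_all _ fun x => ?_)⟩
  rw [norm_of_nonneg (exp_pos _).le]
  exact exp_inner_add_mul_norm_le_sum (half_pos hr).le hclosed (Γ x)

lemma integrable_exp_inner_smul (hΓ : Measurable Γ)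
    (hθ : θ ∈ interior (integrableExpInnerSet Γ ν)) :
    Integrable (fun x => exp ⟪θ, Γ x⟫ • Γ x) ν := by
  obtain ⟨r, hr, hint⟩ := exists_integrable_exp_inner_add_mul_norm hΓ hθ
  refine (hint.const_mul (2 / r)).mono' (by fun_prop) (ae_of_all _ fun x => ?_)
  rw [norm_smul, norm_of_nonneg (exp_pos _).le, mul_comm]
  exact norm_mul_exp_inner_le hr (mem_ball_self (half_pos hr)) (Γ x)

lemma hasFDerivAt_integral_exp_inner (hΓ : Measurable Γ)
    (hθ : θ ∈ interior (integrableExpInnerSet Γ ν)) :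
    HasFDerivAt (fun η => ∫ x, exp ⟪η, Γ x⟫ ∂ν)
      (innerSL ℝ (∫ x, exp ⟪θ, Γ x⟫ • Γ x ∂ν)) θ := by
  obtain ⟨r, hr, hint⟩ := exists_integrable_exp_inner_add_mul_norm hΓ hθ
  rw [← (innerSL ℝ).integral_comp_comm (integrable_exp_inner_smul hΓ hθ)]
  refine hasFDerivAt_integral_of_dominated_of_fderiv_le
    (F' := fun η x => innerSL ℝ (exp ⟪η, Γ x⟫ • Γ x))
    (bound := fun x => 2 / r * exp (⟪θ, Γ x⟫ + r * ‖Γ x‖)) (ball_mem_nhds θ (half_pos hr))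
    (.of_forall fun η => by fun_prop) (interior_subset hθ : θ ∈ integrableExpInnerSet Γ ν)
    (by fun_prop) (ae_of_all _ fun x η hη => ?_) (hint.const_mul _)
    (ae_of_all _ fun x η _ => hasFDerivAt_exp_inner (Γ x) η)
  rw [innerSL_apply_norm, norm_smul, norm_of_nonneg (exp_pos _).le, mul_comm]
  exact norm_mul_exp_inner_le hr hη (Γ x)

end ExpFamily

theorem statement2_general
    {X : Type*} [MeasurableSpace X] (ν : Measure X) (hν : ν ≠ 0)
    {H : Type*} [NormedAddCommGroup H] [InnerProductSpace ℝ H] [FiniteDimensional ℝ H]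
    [MeasurableSpace H] [BorelSpace H]
    (Γ : X → H) (hΓ : Measurable Γ)
    (Θ : Set H) (hΘ : Θ = {θ : H | Integrable (fun x => exp ⟪θ, Γ x⟫) ν})
    (A : H → ℝ) (hA : ∀ θ, A θ = log (∫ x, exp ⟪θ, Γ x⟫ ∂ν))
    (q : H → X → ℝ) (hq : ∀ θ x, q θ x = exp (⟪θ, Γ x⟫ - A θ)) :
    ∀ θ ∈ interior Θ,
      Integrable (fun x => q θ x • Γ x) ν ∧
      HasGradientAt A (∫ x, q θ x • Γ x ∂ν) θ := by
  subst hΘ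
  intro θ hθ
  change θ ∈ interior (integrableExpInnerSet Γ ν) at hθ
  have : NeZero ν := ⟨hν⟩
  have hZ : 0 < ∫ x, exp ⟪θ, Γ x⟫ ∂ν :=
    integral_exp_pos (interior_subset hθ : θ ∈ integrableExpInnerSet Γ ν)
  have hq_eq : (fun x => q θ x • Γ x) =
      fun x => (∫ x, exp ⟪θ, Γ x⟫ ∂ν)⁻¹ • (exp ⟪θ, Γ x⟫ • Γ x) := by
    funext x
    rw [hq, hA, exp_sub, exp_log hZ, smul_smul, div_eq_inv_mul]
  rw [hq_eq, integral_smul, hasGradientAt_iff_hasFDerivAt, show A = _ from funext hA]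
  refine ⟨(integrable_exp_inner_smul hΓ hθ).smul _, ?_⟩
  refine ((hasFDerivAt_integral_exp_inner hΓ hθ).log hZ.ne').congr_fderiv ?_
  ext v
  simp

/-- For `θ` in the interior of `Θ`, the function `x ↦ q_θ(x) Γ(x)` is Bochner integrable and
the log-partition function `A` has gradient equal to the exponential-family mean at `θ`. -/
theorem statement2
    {X : Type*} [MeasurableSpace X] (ν : Measure X) [SigmaFinite ν] (hν : ν ≠ 0)
    {H : Type*} [NormedAddCommGroup H] [InnerProductSpace ℝ H] [FiniteDimensional ℝ H]
    [MeasurableSpace H] [BorelSpace H]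
    (Γ : X → H) (hΓ : Measurable Γ)
    (Θ : Set H) (hΘ : Θ = {θ : H | Integrable (fun x => exp ⟪θ, Γ x⟫) ν})
    (A : H → ℝ) (hA : ∀ θ, A θ = log (∫ x, exp ⟪θ, Γ x⟫ ∂ν))
    (q : H → X → ℝ) (hq : ∀ θ x, q θ x = exp (⟪θ, Γ x⟫ - A θ)) :
    ∀ θ ∈ interior Θ,
      Integrable (fun x => q θ x • Γ x) ν ∧
      HasGradientAt A (∫ x, q θ x • Γ x ∂ν) θ :=
  statement2_general ν hν Γ hΓ Θ hΘ A hA q hq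
end

section
/- For every θ in the interior of Θ and every θ' ∈ Θ, the functions x ↦ q_θ(x) Γ(x) and x ↦ q_θ(x) · log(q_θ(x)/q_{θ'}(x)) are ν-integrable, and the Kullback–Leibler divergence between q_θ and q_{θ'} equals the Bregman divergence of A between the parameters: ∫ q_θ(x) log(q_θ(x)/q_{θ'}(x)) ν(dx) = A(θ') − A(θ) − ⟨m_θ, θ' − θ⟩, where m_θ = ∫ q_θ(x) Γ(x) ν(dx) is the gradient of A at θ. -/
/-!
Write `q_θ = exp (⟪θ, Γ⟫ - A θ)`. Then `log (q_θ / q_θ') = ⟪θ - θ', Γ⟫ + A θ' - A θ`, so the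
Kullback–Leibler integrand is `⟪θ - θ', q_θ Γ⟫ + (A θ' - A θ) q_θ`, and integrating it against
`ν` (with `∫ q_θ = 1`) gives the Bregman divergence. The only analytic input is the
integrability of `q_θ Γ` for interior `θ`: from `|t| ≤ eᵗ + e⁻ᵗ`,
`e^⟪θ, Γ⟫ |⟪w, Γ⟫| ≤ e^⟪θ + w, Γ⟫ + e^⟪θ - w, Γ⟫`, which is integrable once `θ ± w ∈ Θ`;
this controls every coordinate of `e^⟪θ, Γ⟫ Γ`, and `H` is finite-dimensional.
-/

open MeasureTheory Real Filter Topology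
open scoped RealInnerProductSpace

lemma abs_le_exp_add_exp_neg (t : ℝ) : |t| ≤ exp t + exp (-t) := by
  rcases abs_cases t with ⟨h, _⟩ | ⟨h, _⟩ <;> rw [h] <;>
    linarith [add_one_le_exp t, add_one_le_exp (-t), exp_pos t, exp_pos (-t)]

lemma integral_exp_sub_log_integral_exp {X : Type*} [MeasurableSpace X] {ν : Measure X}
    [NeZero ν] {f : X → ℝ} (hf : Integrable (fun x => exp (f x)) ν) :
    ∫ x, exp (f x - log (∫ y, exp (f y) ∂ν)) ∂ν = 1 := by
  simp only [exp_sub, integral_div, exp_log (integral_exp_pos hf)]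
  exact div_self (integral_exp_pos hf).ne'

section Integrability

variable {X : Type*} [MeasurableSpace X] {ν : Measure X}
  {H : Type*} [NormedAddCommGroup H] [InnerProductSpace ℝ H]

lemma integrable_of_forall_integrable_inner [FiniteDimensional ℝ H] {f : X → H}
    (hf : ∀ w : H, Integrable (fun x => ⟪w, f x⟫) ν) : Integrable f ν := by
  let b := stdOrthonormalBasis ℝ H
  simpa only [b.sum_repr'] using
    integrable_finsetSum Finset.univ fun i _ => (hf (b i)).smul_const (b i)

variable [MeasurableSpace H] [BorelSpace H] {Γ : X → H}

lemma integrable_exp_inner_mul_inner (hΓ : Measurable Γ) {θ w : H}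
    (hplus : Integrable (fun x => exp ⟪θ + w, Γ x⟫) ν)
    (hminus : Integrable (fun x => exp ⟪θ - w, Γ x⟫) ν) :
    Integrable (fun x => exp ⟪θ, Γ x⟫ * ⟪w, Γ x⟫) ν := by
  have hmeas (v : H) : Measurable fun x => ⟪v, Γ x⟫ :=
    (continuous_const.inner continuous_id).measurable.comp hΓ
  refine (hplus.add hminus).mono' ((hmeas θ).exp.mul (hmeas w)).aestronglyMeasurable
    (ae_of_all _ fun x => ?_)
  rw [norm_mul, norm_of_nonneg (exp_pos _).le, norm_eq_abs]
  calc exp ⟪θ, Γ x⟫ * |⟪w, Γ x⟫|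
      ≤ exp ⟪θ, Γ x⟫ * (exp ⟪w, Γ x⟫ + exp (-⟪w, Γ x⟫)) :=
        mul_le_mul_of_nonneg_left (abs_le_exp_add_exp_neg _) (exp_pos _).le
    _ = exp ⟪θ + w, Γ x⟫ + exp ⟪θ - w, Γ x⟫ := by
        rw [inner_add_left, inner_sub_left, mul_add, ← exp_add, ← exp_add, sub_eq_add_neg]

lemma integrable_exp_inner_mul_inner_of_mem_interior (hΓ : Measurable Γ) {θ : H}
    (hθ : θ ∈ interior {η | Integrable (fun x => exp ⟪η, Γ x⟫) ν}) (w : H) :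
    Integrable (fun x => exp ⟪θ, Γ x⟫ * ⟪w, Γ x⟫) ν := by
  have hnhds := mem_interior_iff_mem_nhds.mp hθ
  have hcont (c : ℝ) : Tendsto (fun s : ℝ => θ + (c * s) • w) (𝓝[>] 0) (𝓝 θ) := by
    have : Continuous fun s : ℝ => θ + (c * s) • w := by fun_prop
    simpa using (this.tendsto 0).mono_left nhdsWithin_le_nhds
  obtain ⟨s, hplus, hminus, hs⟩ := (((hcont 1).eventually hnhds).and
    (((hcont (-1)).eventually hnhds).and self_mem_nhdsWithin)).exists
  simp only [one_mul, neg_one_mul, neg_smul, ← sub_eq_add_neg] at hplus hminus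
  have := (integrable_exp_inner_mul_inner hΓ hplus hminus).const_mul s⁻¹
  refine this.congr (ae_of_all _ fun x => ?_)
  simp only [inner_smul_left, RCLike.conj_to_real]
  field_simp [hs.ne']

lemma integrable_exp_inner_smul_of_mem_interior [FiniteDimensional ℝ H] (hΓ : Measurable Γ)
    {θ : H} (hθ : θ ∈ interior {η | Integrable (fun x => exp ⟪η, Γ x⟫) ν}) :
    Integrable (fun x => exp ⟪θ, Γ x⟫ • Γ x) ν :=
  integrable_of_forall_integrable_inner fun w => by
    simpa only [inner_smul_right] using integrable_exp_inner_mul_inner_of_mem_interior hΓ hθ w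

end Integrability

theorem statement3_general
    {X : Type*} [MeasurableSpace X] (ν : Measure X) (hν : ν ≠ 0)
    {H : Type*} [NormedAddCommGroup H] [InnerProductSpace ℝ H] [FiniteDimensional ℝ H]
    [MeasurableSpace H] [BorelSpace H]
    (Γ : X → H) (hΓ : Measurable Γ)
    (Θ : Set H) (hΘ : Θ = {θ : H | Integrable (fun x => exp ⟪θ, Γ x⟫) ν})
    (A : H → ℝ) (hA : ∀ θ, A θ = log (∫ x, exp ⟪θ, Γ x⟫ ∂ν))
    (q : H → X → ℝ) (hq : ∀ θ x, q θ x = exp (⟪θ, Γ x⟫ - A θ)) :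
    ∀ θ ∈ interior Θ, ∀ θ' ∈ Θ,
      Integrable (fun x => q θ x • Γ x) ν ∧
      Integrable (fun x => q θ x * log (q θ x / q θ' x)) ν ∧
      ∫ x, q θ x * log (q θ x / q θ' x) ∂ν
        = A θ' - A θ - ⟪∫ x, q θ x • Γ x ∂ν, θ' - θ⟫ := by
  subst hΘ
  intro θ hθ θ' _
  have : NeZero ν := ⟨hν⟩
  have hθΘ := interior_subset hθ
  have hZ : Integrable (fun x => exp ⟪θ, Γ x⟫) ν := hθΘ
  have hqθ : q θ = fun x => exp (-A θ) * exp ⟪θ, Γ x⟫ := by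
    funext x; rw [hq, ← exp_add, neg_add_eq_sub]
  have hq_int : Integrable (q θ) ν := hqθ ▸ hZ.const_mul _
  have hqΓ : Integrable (fun x => q θ x • Γ x) ν := by
    simpa only [hqθ, mul_smul, Pi.smul_def] using
      (integrable_exp_inner_smul_of_mem_interior hΓ hθ).smul (exp (-A θ))
  have hq_one : ∫ x, q θ x ∂ν = 1 := by
    simp only [hq, hA]
    exact integral_exp_sub_log_integral_exp hZ
  have hKL : (fun x => q θ x * log (q θ x / q θ' x))
      = fun x => ⟪θ - θ', q θ x • Γ x⟫ + (A θ' - A θ) * q θ x := by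
    funext x
    rw [hq θ x, hq θ' x, ← exp_sub, log_exp, inner_smul_right, inner_sub_left]
    ring
  refine ⟨hqΓ, hKL ▸ (hqΓ.const_inner _).add (hq_int.const_mul _), ?_⟩
  rw [hKL, integral_add (hqΓ.const_inner _) (hq_int.const_mul _), integral_inner hqΓ,
    integral_const_mul, hq_one, real_inner_comm, ← neg_sub θ' θ, inner_neg_right]
  ring

/-- For `θ` in the interior of `Θ` and `θ' ∈ Θ`, the KL divergence between `q_θ` and `q_θ'`
is well defined and equals the Bregman divergence of the log-partition function `A`
between the parameters: `KL(q_θ, q_θ') = A θ' - A θ - ⟪∇A θ, θ' - θ⟫`, where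
`∇A θ = ∫ q_θ(x) Γ(x) dν`. -/
theorem statement3
    {X : Type*} [MeasurableSpace X] (ν : Measure X) [SigmaFinite ν] (hν : ν ≠ 0)
    {H : Type*} [NormedAddCommGroup H] [InnerProductSpace ℝ H] [FiniteDimensional ℝ H]
    [MeasurableSpace H] [BorelSpace H]
    (Γ : X → H) (hΓ : Measurable Γ)
    (Θ : Set H) (hΘ : Θ = {θ : H | Integrable (fun x => exp ⟪θ, Γ x⟫) ν})
    (A : H → ℝ) (hA : ∀ θ, A θ = log (∫ x, exp ⟪θ, Γ x⟫ ∂ν))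
    (q : H → X → ℝ) (hq : ∀ θ x, q θ x = exp (⟪θ, Γ x⟫ - A θ)) :
    ∀ θ ∈ interior Θ, ∀ θ' ∈ Θ,
      Integrable (fun x => q θ x • Γ x) ν ∧
      Integrable (fun x => q θ x * log (q θ x / q θ' x)) ν ∧
      ∫ x, q θ x * log (q θ x / q θ' x) ∂ν
        = A θ' - A θ - ⟪∫ x, q θ x • Γ x ∂ν, θ' - θ⟫ :=
  statement3_general ν hν Γ hΓ Θ hΘ A hA q hq
end

section
/- Let π : X → [0,∞) be measurable with ∫ π dν = 1 and let α ∈ (0,1). For θ ∈ Θ define f(θ) = (1/(α−1)) · log ∫ π(x)^α q_θ(x)^{1−α} ν(dx) (the Rényi divergence RD_α(π, q_θ); the integral is finite by Hölder's inequality and positive). Then for every θ in the interior of Θ: the functions x ↦ q_θ(x) Γ(x) and x ↦ π(x)^α q_θ(x)^{1−α} Γ(x) are Bochner ν-integrable, and f has a gradient at θ equal to m_θ − m̃_θ, where m_θ = ∫ q_θ(x) Γ(x) ν(dx) and m̃_θ = (∫ π(x)^α q_θ(x)^{1−α} Γ(x) ν(dx)) / (∫ π(x)^α q_θ(x)^{1−α}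 ν(dx)). -/
open MeasureTheory Real
open scoped RealInnerProductSpace

/-!
Write `W(ϑ) = ∫ π^α e^⟪ϑ, (1-α) Γ⟫ dν`. Since `q_ϑ^(1-α) = e^(-(1-α) A(ϑ)) e^⟪ϑ, (1-α) Γ⟫`,
on `Θ` the objective is `f = A - (1-α)⁻¹ log W`, and both `A` and `log W` are logarithms of
Laplace transforms `ϑ ↦ ∫ w e^⟪ϑ, Γ⟫ dν` of nonnegative weights; the domain of `W` contains `Θ`
by weighted AM-GM. In the interior of its domain such a transform may be differentiated under
the integral sign, with gradient `∫ w e^⟪θ, Γ⟫ Γ dν`: near `θ`, `e^⟪ϑ, Γ⟫ ‖Γ‖` is dominated by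
the finite sum of `e^⟪θ + u, Γ⟫` over the corners `u` of a small cube, each of them integrable.
The normalising constants then cancel in the two means.
-/

section Gradient

variable {H : Type*} [NormedAddCommGroup H] [InnerProductSpace ℝ H] [CompleteSpace H]
  {f g : H → ℝ} {f' g' x : H}

theorem HasGradientAt.sub (hf : HasGradientAt f f' x) (hg : HasGradientAt g g' x) :
    HasGradientAt (fun y => f y - g y) (f' - g') x := by
  rw [hasGradientAt_iff_hasFDerivAt, map_sub]
  exact hf.hasFDerivAt.sub hg.hasFDerivAt

theorem HasGradientAt.const_mul (c : ℝ) (hf : HasGradientAt f f' x) :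
    HasGradientAt (fun y => c * f y) (c • f') x := by
  rw [hasGradientAt_iff_hasFDerivAt, map_smulₛₗ, conj_trivial]
  exact hf.hasFDerivAt.const_mul c

theorem HasGradientAt.log (hf : HasGradientAt f f' x) (hx : f x ≠ 0) :
    HasGradientAt (fun y => log (f y)) ((f x)⁻¹ • f') x := by
  rw [hasGradientAt_iff_hasFDerivAt, map_smulₛₗ, conj_trivial]
  exact hf.hasFDerivAt.log hx

theorem hasGradientAt_inner_const (y x : H) : HasGradientAt (fun ϑ : H => ⟪ϑ, y⟫) y x := by
  have h := (InnerProductSpace.toDual ℝ H y).hasFDerivAt (x := x)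
  rwa [show ⇑(InnerProductSpace.toDual ℝ H y) = fun ϑ => ⟪ϑ, y⟫ from
    funext fun ϑ => real_inner_comm ϑ y, ← hasGradientAt_iff_hasFDerivAt] at h

theorem HasGradientAt.exp (hf : HasGradientAt f f' x) :
    HasGradientAt (fun y => exp (f y)) (exp (f x) • f') x := by
  rw [hasGradientAt_iff_hasFDerivAt, map_smulₛₗ, conj_trivial]
  exact hf.hasFDerivAt.exp

end Gradient

section Basis

variable {H : Type*} [NormedAddCommGroup H] [InnerProductSpace ℝ H]
  {ι : Type*} [Fintype ι] [DecidableEq ι] (b : OrthonormalBasis ι ℝ H)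

theorem OrthonormalBasis.norm_sum_sub_sum_compl_le (T : Finset ι) :
    ‖∑ i ∈ T, b i - ∑ i ∈ Tᶜ, b i‖ ≤ Fintype.card ι := by
  calc ‖∑ i ∈ T, b i - ∑ i ∈ Tᶜ, b i‖
      ≤ ∑ i ∈ T, ‖b i‖ + ∑ i ∈ Tᶜ, ‖b i‖ :=
        (norm_sub_le _ _).trans (add_le_add (norm_sum_le _ _) (norm_sum_le _ _))
    _ = Fintype.card ι := by rw [Finset.sum_add_sum_compl]; simp [b.orthonormal.1]

theorem OrthonormalBasis.exp_mul_norm_le_sum_exp_inner {c : ℝ} (hc : 0 ≤ c) (y : H) :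
    exp (c * ‖y‖) ≤ ∑ T : Finset ι, exp ⟪c • (∑ i ∈ T, b i - ∑ i ∈ Tᶜ, b i), y⟫ := by
  have hnorm : ‖y‖ ≤ ∑ i, |⟪b i, y⟫| := by
    calc ‖y‖ = ‖∑ i, ⟪b i, y⟫ • b i‖ := by rw [b.sum_repr' y]
      _ ≤ ∑ i, |⟪b i, y⟫| := by
        refine (norm_sum_le _ _).trans_eq (Finset.sum_congr rfl fun i _ => ?_)
        simp [norm_smul, b.orthonormal.1 i]
  calc exp (c * ‖y‖) ≤ ∏ i, exp (c * |⟪b i, y⟫|) := by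
        rw [← exp_sum, ← Finset.mul_sum]
        exact exp_le_exp.2 (mul_le_mul_of_nonneg_left hnorm hc)
    _ ≤ ∏ i, (exp (c * ⟪b i, y⟫) + exp (-(c * ⟪b i, y⟫))) := by
      refine Finset.prod_le_prod (fun i _ => (exp_pos _).le) fun i _ => ?_
      rcases abs_cases ⟪b i, y⟫ with ⟨h, _⟩ | ⟨h, _⟩ <;> rw [h]
      · exact le_add_of_nonneg_right (exp_pos _).le
      · exact mul_neg c _ ▸ le_add_of_nonneg_left (exp_pos _).le
    _ = ∑ T : Finset ι, exp ⟪c • (∑ i ∈ T, b i - ∑ i ∈ Tᶜ, b i), y⟫ := by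
      rw [Finset.prod_add, Finset.powerset_univ]
      refine Finset.sum_congr rfl fun T _ => ?_
      rw [← Finset.compl_eq_univ_sdiff, ← exp_sum, ← exp_sum, ← exp_add, real_inner_smul_left,
        inner_sub_left, sum_inner, sum_inner, Finset.sum_neg_distrib, mul_sub, Finset.mul_sum,
        Finset.mul_sum, sub_eq_add_neg]

end Basis

section Integrals

variable {X : Type*} [MeasurableSpace X] {ν : Measure X}
  {H : Type*} [NormedAddCommGroup H] [InnerProductSpace ℝ H]

theorem MeasureTheory.Integrable.rpow_mul_rpow {f g : X → ℝ} (hf : Integrable f ν)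
    (hg : Integrable g ν) (hf0 : 0 ≤ f) (hg0 : 0 ≤ g) {a b : ℝ} (ha : 0 ≤ a) (hb : 0 ≤ b) (hab : a + b = 1) :
    Integrable (fun x => f x ^ a * g x ^ b) ν := by
  refine ((hf.const_mul a).add (hg.const_mul b)).mono'
    ((hf.aemeasurable.pow_const a).mul (hg.aemeasurable.pow_const b)).aestronglyMeasurable
    (ae_of_all _ fun x => ?_)
  rw [norm_of_nonneg (mul_nonneg (rpow_nonneg (hf0 x) a) (rpow_nonneg (hg0 x) b))]
  exact geom_mean_le_arith_mean2_weighted ha hb (hf0 x) (hg0 x) hab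

theorem MeasureTheory.Integrable.rpow_mul_exp_inner_smul {p : X → ℝ} {Γ : X → H} {a : ℝ} {ϑ : H}
    (hp : Integrable p ν) (hp0 : 0 ≤ p) (ha0 : 0 ≤ a) (ha1 : a ≤ 1)
    (hϑ : Integrable (fun x => exp ⟪ϑ, Γ x⟫) ν) :
    Integrable (fun x => p x ^ a * exp ⟪ϑ, (1 - a) • Γ x⟫) ν := by
  refine (hp.rpow_mul_rpow hϑ hp0 (fun x => (exp_pos _).le) ha0 (sub_nonneg.2 ha1)
    (add_sub_cancel a 1)).congr (ae_of_all _ fun x => ?_)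
  dsimp only
  rw [real_inner_smul_right, mul_comm (1 - a), exp_mul]

theorem integral_rpow_mul_exp_pos {p φ : X → ℝ} {a : ℝ} (hp0 : 0 ≤ p) (ha : 0 < a)
    (hint : Integrable (fun x => p x ^ a * exp (φ x)) ν) (hsupp : 0 < ν (Function.support p)) :
    0 < ∫ x, p x ^ a * exp (φ x) ∂ν := by
  rw [integral_pos_iff_support_of_nonneg
    (fun x => mul_nonneg (rpow_nonneg (hp0 x) a) (exp_pos _).le) hint]
  convert hsupp using 2
  ext x
  simp [rpow_eq_zero (hp0 x) ha.ne', (exp_pos _).ne']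

theorem inv_integral_const_mul_smul_integral {Γ : X → H} {c : ℝ} (hc : c ≠ 0) (g : X → ℝ) :
    (∫ x, c * g x ∂ν)⁻¹ • ∫ x, (c * g x) • Γ x ∂ν = (∫ x, g x ∂ν)⁻¹ • ∫ x, g x • Γ x ∂ν := by
  simp_rw [integral_const_mul, mul_smul, integral_smul, smul_smul, mul_inv_rev, mul_assoc,
    inv_mul_cancel₀ hc, mul_one]

end Integrals

section Laplace

variable {X : Type*} [MeasurableSpace X] {ν : Measure X}
  {H : Type*} [NormedAddCommGroup H] [InnerProductSpace ℝ H]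

theorem exp_inner_mul_norm_le {θ ϑ : H} {ε : ℝ} (hε : 0 < ε) (hϑ : ϑ ∈ Metric.ball θ ε) (y : H) :
    exp ⟪ϑ, y⟫ * ‖y‖ ≤ ε⁻¹ * (exp ⟪θ, y⟫ * exp (2 * ε * ‖y‖)) := by
  have hinner : ⟪ϑ, y⟫ ≤ ⟪θ, y⟫ + ε * ‖y‖ := by
    have h := (real_inner_le_norm (ϑ - θ) y).trans
      (mul_le_mul_of_nonneg_right (mem_ball_iff_norm.1 hϑ).le (norm_nonneg y))
    rw [inner_sub_left] at h
    linarith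
  have hnorm : ‖y‖ ≤ ε⁻¹ * exp (ε * ‖y‖) :=
    (le_inv_mul_iff₀ hε).2 (by linarith [add_one_le_exp (ε * ‖y‖)])
  calc exp ⟪ϑ, y⟫ * ‖y‖ ≤ exp (⟪θ, y⟫ + ε * ‖y‖) * (ε⁻¹ * exp (ε * ‖y‖)) := by
        gcongr
    _ = ε⁻¹ * (exp ⟪θ, y⟫ * exp (2 * ε * ‖y‖)) := by
        rw [exp_add, two_mul, add_mul, exp_add]
        ring

theorem exists_integrable_bound_smul_exp_inner [FiniteDimensional ℝ H] {w : X → ℝ} {Γ : X → H}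
    {θ : H} (hθ : θ ∈ interior {ϑ | Integrable (fun x => w x * exp ⟪ϑ, Γ x⟫) ν}) :
    ∃ ε > 0, ∃ g : X → ℝ, Integrable g ν ∧
      ∀ x, ∀ ϑ ∈ Metric.ball θ ε, ‖(w x * exp ⟪ϑ, Γ x⟫) • Γ x‖ ≤ g x := by
  obtain ⟨δ, hδ, hball⟩ := Metric.isOpen_iff.1 isOpen_interior θ hθ
  set b := stdOrthonormalBasis ℝ H
  set n : ℝ := (Fintype.card (Fin (Module.finrank ℝ H)) : ℝ)
  set ε := δ / (2 * n + 2)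
  have hε : 0 < ε := by positivity
  set u : Finset (Fin (Module.finrank ℝ H)) → H :=
    fun T => (2 * ε) • (∑ i ∈ T, b i - ∑ i ∈ Tᶜ, b i)
  -- the `θ + u T` are the corners of a cube around `θ`, small enough to lie in the domain
  have hu : ∀ T, θ + u T ∈ {ϑ | Integrable (fun x => w x * exp ⟪ϑ, Γ x⟫) ν} := by
    refine fun T => interior_subset (hball (mem_ball_iff_norm.2 ?_))
    calc ‖θ + u T - θ‖ ≤ 2 * ε * n := by
          rw [add_sub_cancel_left, norm_smul, norm_of_nonneg (by positivity)]
          exact mul_le_mul_of_nonneg_left (b.norm_sum_sub_sum_compl_le T) (by positivity)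
      _ < δ := by
          have h : ε * (2 * n + 2) = δ := div_mul_cancel₀ δ (by positivity)
          linarith
  refine ⟨ε, hε, fun x => ε⁻¹ * ∑ T, ‖w x * exp ⟪θ + u T, Γ x⟫‖,
    (integrable_finsetSum _ fun T _ => Integrable.norm (hu T)).const_mul _, fun x ϑ hϑ => ?_⟩
  calc ‖(w x * exp ⟪ϑ, Γ x⟫) • Γ x‖ = |w x| * (exp ⟪ϑ, Γ x⟫ * ‖Γ x‖) := by
        rw [norm_smul, norm_mul, norm_of_nonneg (exp_pos _).le, Real.norm_eq_abs, mul_assoc]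
    _ ≤ |w x| * (ε⁻¹ * (exp ⟪θ, Γ x⟫ * exp (2 * ε * ‖Γ x‖))) :=
        mul_le_mul_of_nonneg_left (exp_inner_mul_norm_le hε hϑ _) (abs_nonneg _)
    _ ≤ |w x| * (ε⁻¹ * (exp ⟪θ, Γ x⟫ * ∑ T, exp ⟪u T, Γ x⟫)) := by
        gcongr
        exact b.exp_mul_norm_le_sum_exp_inner (by positivity) _
    _ = ε⁻¹ * ∑ T, ‖w x * exp ⟪θ + u T, Γ x⟫‖ := by
        simp only [Finset.mul_sum, norm_mul, Real.norm_eq_abs, abs_of_pos (exp_pos _),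
          inner_add_left, exp_add]
        exact Finset.sum_congr rfl fun _ _ => mul_left_comm _ _ _

variable [FiniteDimensional ℝ H] {w : X → ℝ} {Γ : X → H} {θ : H}

theorem integrable_smul_exp_inner_of_mem_interior (hΓ : AEStronglyMeasurable Γ ν)
    (hθ : θ ∈ interior {ϑ | Integrable (fun x => w x * exp ⟪ϑ, Γ x⟫) ν}) :
    Integrable (fun x => (w x * exp ⟪θ, Γ x⟫) • Γ x) ν := by
  obtain ⟨ε, hε, g, hg, hbound⟩ := exists_integrable_bound_smul_exp_inner hθ
  exact hg.mono' ((interior_subset hθ).out.aestronglyMeasurable.smul hΓ)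
    (ae_of_all _ fun x => hbound x θ (Metric.mem_ball_self hε))

theorem hasGradientAt_integral_mul_exp_inner (hΓ : AEStronglyMeasurable Γ ν)
    (hθ : θ ∈ interior {ϑ | Integrable (fun x => w x * exp ⟪ϑ, Γ x⟫) ν}) :
    HasGradientAt (fun ϑ => ∫ x, w x * exp ⟪ϑ, Γ x⟫ ∂ν)
      (∫ x, (w x * exp ⟪θ, Γ x⟫) • Γ x ∂ν) θ := by
  obtain ⟨ε, hε, g, hg, hbound⟩ := exists_integrable_bound_smul_exp_inner hθ
  have hint := integrable_smul_exp_inner_of_mem_interior hΓ hθ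
  have hderiv : ∀ x ϑ, HasGradientAt (fun ϑ => w x * exp ⟪ϑ, Γ x⟫)
      ((w x * exp ⟪ϑ, Γ x⟫) • Γ x) ϑ := fun x ϑ => by
    simpa only [smul_smul] using ((hasGradientAt_inner_const (Γ x) ϑ).exp.const_mul (w x))
  rw [hasGradientAt_iff_hasFDerivAt]
  show HasFDerivAt _ (innerSL ℝ _) θ
  rw [← (innerSL ℝ).integral_comp_comm hint]
  refine hasFDerivAt_integral_of_dominated_of_fderiv_le (Metric.ball_mem_nhds θ hε) ?_
    (interior_subset hθ).out ((innerSL ℝ).continuous.comp_aestronglyMeasurable hint.1)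
    (ae_of_all _ fun x ϑ hϑ => (innerSL_apply_norm ℝ _).trans_le (hbound x ϑ hϑ)) hg
    (ae_of_all _ fun x ϑ _ => hasGradientAt_iff_hasFDerivAt.1 (hderiv x ϑ))
  filter_upwards [isOpen_interior.mem_nhds hθ] with ϑ hϑ
  exact (interior_subset hϑ).out.aestronglyMeasurable

theorem hasGradientAt_log_integral_exp_inner [NeZero ν] (hΓ : AEStronglyMeasurable Γ ν)
    (hθ : θ ∈ interior {ϑ | Integrable (fun x => exp ⟪ϑ, Γ x⟫) ν}) :
    Integrable (fun x => exp (⟪θ, Γ x⟫ - log (∫ x, exp ⟪θ, Γ x⟫ ∂ν)) • Γ x) ν ∧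
    HasGradientAt (fun ϑ => log (∫ x, exp ⟪ϑ, Γ x⟫ ∂ν))
      (∫ x, exp (⟪θ, Γ x⟫ - log (∫ x, exp ⟪θ, Γ x⟫ ∂ν)) • Γ x ∂ν) θ := by
  have hθ1 : θ ∈ interior {ϑ | Integrable (fun x => (fun _ => (1 : ℝ)) x * exp ⟪ϑ, Γ x⟫) ν} := by
    simpa using hθ
  have hint := integrable_smul_exp_inner_of_mem_interior hΓ hθ1
  have hgrad := hasGradientAt_integral_mul_exp_inner hΓ hθ1
  simp only [one_mul] at hint hgrad
  have hZ := integral_exp_pos (interior_subset hθ).out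
  simp_rw [exp_sub, exp_log hZ, div_eq_inv_mul, mul_smul, integral_smul]
  exact ⟨hint.smul (∫ x, exp ⟪θ, Γ x⟫ ∂ν)⁻¹, hgrad.log hZ.ne'⟩

theorem hasGradientAt_log_integral_rpow_mul_exp_inner {p : X → ℝ} {a : ℝ}
    (hp : Integrable p ν) (hp0 : 0 ≤ p) (hsupp : 0 < ν (Function.support p))
    (ha0 : 0 < a) (ha1 : a < 1) (hΓ : AEStronglyMeasurable Γ ν)
    (hθ : θ ∈ interior {ϑ | Integrable (fun x => exp ⟪ϑ, Γ x⟫) ν}) :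
    Integrable (fun x => (p x ^ a * exp ⟪θ, (1 - a) • Γ x⟫) • Γ x) ν ∧
    HasGradientAt (fun ϑ => log (∫ x, p x ^ a * exp ⟪ϑ, (1 - a) • Γ x⟫ ∂ν))
      ((1 - a) • ((∫ x, p x ^ a * exp ⟪θ, (1 - a) • Γ x⟫ ∂ν)⁻¹ •
        ∫ x, (p x ^ a * exp ⟪θ, (1 - a) • Γ x⟫) • Γ x ∂ν)) θ := by
  have hθa : θ ∈ interior {ϑ | Integrable (fun x => p x ^ a * exp ⟪ϑ, (1 - a) • Γ x⟫) ν} :=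
    interior_mono (fun ϑ hϑ => hp.rpow_mul_exp_inner_smul hp0 ha0.le ha1.le hϑ) hθ
  have hΓa : AEStronglyMeasurable (fun x => (1 - a) • Γ x) ν := hΓ.const_smul (1 - a)
  have hint := integrable_smul_exp_inner_of_mem_interior hΓa hθa
  have hgrad := (hasGradientAt_integral_mul_exp_inner hΓa hθa).log
    (integral_rpow_mul_exp_pos hp0 ha0 (interior_subset hθa).out hsupp).ne'
  simp_rw [smul_comm _ (1 - a)] at hint hgrad
  rw [integral_smul, smul_comm] at hgrad
  exact ⟨(integrable_smul_iff (sub_ne_zero.2 ha1.ne') _).1 hint, hgrad⟩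

theorem hasGradientAt_renyi {p : X → ℝ} {a : ℝ} {A : H → ℝ} {m : H}
    (hp : Integrable p ν) (hp0 : 0 ≤ p) (hsupp : 0 < ν (Function.support p))
    (ha0 : 0 < a) (ha1 : a < 1) (hΓ : AEStronglyMeasurable Γ ν)
    (hθ : θ ∈ interior {ϑ | Integrable (fun x => exp ⟪ϑ, Γ x⟫) ν}) (hA : HasGradientAt A m θ) :
    Integrable (fun x => (p x ^ a * exp (⟪θ, Γ x⟫ - A θ) ^ (1 - a)) • Γ x) ν ∧
    HasGradientAt
      (fun ϑ => 1 / (a - 1) * log (∫ x, p x ^ a * exp (⟪ϑ, Γ x⟫ - A ϑ) ^ (1 - a) ∂ν))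
      (m - (∫ x, p x ^ a * exp (⟪θ, Γ x⟫ - A θ) ^ (1 - a) ∂ν)⁻¹ •
        ∫ x, (p x ^ a * exp (⟪θ, Γ x⟫ - A θ) ^ (1 - a)) • Γ x ∂ν) θ := by
  have hb : 1 - a ≠ 0 := sub_ne_zero.2 ha1.ne'
  have hfactor : ∀ ϑ x, p x ^ a * exp (⟪ϑ, Γ x⟫ - A ϑ) ^ (1 - a)
      = exp (-((1 - a) * A ϑ)) * (p x ^ a * exp ⟪ϑ, (1 - a) • Γ x⟫) := fun ϑ x => by
    rw [← exp_mul, real_inner_smul_right, show (⟪ϑ, Γ x⟫ - A ϑ) * (1 - a)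
      = -((1 - a) * A ϑ) + (1 - a) * ⟪ϑ, Γ x⟫ by ring, exp_add]
    ring
  have hfeq : (fun ϑ => 1 / (a - 1) * log (∫ x, p x ^ a * exp (⟪ϑ, Γ x⟫ - A ϑ) ^ (1 - a) ∂ν))
      =ᶠ[nhds θ] fun ϑ => A ϑ - (1 - a)⁻¹ * log (∫ x, p x ^ a * exp ⟪ϑ, (1 - a) • Γ x⟫ ∂ν) := by
    filter_upwards [isOpen_interior.mem_nhds hθ] with ϑ hϑ
    have hW := integral_rpow_mul_exp_pos hp0 ha0
      (hp.rpow_mul_exp_inner_smul hp0 ha0.le ha1.le (interior_subset hϑ).out) hsupp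
    rw [integral_congr_ae (ae_of_all _ (hfactor ϑ)), integral_const_mul,
      log_mul (exp_ne_zero _) hW.ne', log_exp, one_div, ← neg_sub 1 a, inv_neg]
    field_simp
    ring
  have hmean : (∫ x, p x ^ a * exp (⟪θ, Γ x⟫ - A θ) ^ (1 - a) ∂ν)⁻¹ •
        ∫ x, (p x ^ a * exp (⟪θ, Γ x⟫ - A θ) ^ (1 - a)) • Γ x ∂ν
      = (∫ x, p x ^ a * exp ⟪θ, (1 - a) • Γ x⟫ ∂ν)⁻¹ •
        ∫ x, (p x ^ a * exp ⟪θ, (1 - a) • Γ x⟫) • Γ x ∂ν := by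
    simp_rw [hfactor]
    exact inv_integral_const_mul_smul_integral (exp_ne_zero _) _
  obtain ⟨hint, hW⟩ := hasGradientAt_log_integral_rpow_mul_exp_inner hp hp0 hsupp ha0 ha1 hΓ hθ
  refine ⟨by simpa only [hfactor, mul_smul, Pi.smul_def] using
    hint.smul (exp (-((1 - a) * A θ))), ?_⟩
  rw [hmean]
  convert (hA.sub (hW.const_mul (1 - a)⁻¹)).congr_of_eventuallyEq hfeq using 2
  rw [inv_smul_smul₀ hb]

end Laplace

theorem statement4_general
    {X : Type*} [MeasurableSpace X] (ν : Measure X)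
    {H : Type*} [NormedAddCommGroup H] [InnerProductSpace ℝ H] [FiniteDimensional ℝ H]
    [MeasurableSpace H] [BorelSpace H]
    (Γ : X → H) (hΓ : Measurable Γ)
    (Θ : Set H) (hΘ : Θ = {θ : H | Integrable (fun x => exp ⟪θ, Γ x⟫) ν})
    (A : H → ℝ) (hA : ∀ θ, A θ = log (∫ x, exp ⟪θ, Γ x⟫ ∂ν))
    (q : H → X → ℝ) (hq : ∀ θ x, q θ x = exp (⟪θ, Γ x⟫ - A θ))
    (p : X → ℝ) (hp0 : ∀ x, 0 ≤ p x)
    (hp1 : ∫ x, p x ∂ν = 1)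
    (α : ℝ) (hα : α ∈ Set.Ioo (0:ℝ) 1)
    (f : H → ℝ)
    (hf : ∀ θ, f θ = (1/(α-1)) * log (∫ x, p x ^ α * q θ x ^ (1-α) ∂ν)) :
    ∀ θ ∈ interior Θ,
      Integrable (fun x => q θ x • Γ x) ν ∧
      Integrable (fun x => (p x ^ α * q θ x ^ (1-α)) • Γ x) ν ∧
      HasGradientAt f
        ((∫ x, q θ x • Γ x ∂ν)
          - (∫ x, p x ^ α * q θ x ^ (1-α) ∂ν)⁻¹ •
            (∫ x, (p x ^ α * q θ x ^ (1-α)) • Γ x ∂ν)) θ := by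
  subst hΘ
  intro θ hθ
  obtain ⟨hα0, hα1⟩ := hα
  have hp : Integrable p ν := Integrable.of_integral_ne_zero (hp1 ▸ one_ne_zero)
  have hsupp : 0 < ν (Function.support p) :=
    (integral_pos_iff_support_of_nonneg hp0 hp).1 (hp1 ▸ one_pos)
  have : NeZero ν := ⟨fun h => by simp [h] at hsupp⟩
  obtain ⟨hint, hgradA⟩ := hasGradientAt_log_integral_exp_inner hΓ.aestronglyMeasurable hθ
  simp only [← hA] at hint hgradA
  obtain ⟨hintα, hgrad⟩ :=
    hasGradientAt_renyi hp hp0 hsupp hα0 hα1 hΓ.aestronglyMeasurable hθ hgradA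
  rw [show f = _ from funext hf]
  simp only [hq]
  exact ⟨hint, hintα, hgrad⟩

/-- For a probability density `p` (the target `π`) and `α ∈ (0,1)`, the Rényi objective
`f θ = (1/(α-1)) log ∫ p^α q_θ^{1-α} dν` has, at every `θ` in the interior of `Θ`,
a gradient equal to `m_θ - m̃_θ`, where `m_θ` is the mean of `Γ` under `q_θ` and `m̃_θ`
is the mean of `Γ` under the normalized geometric average of `p` and `q_θ`. -/
theorem statement4
    {X : Type*} [MeasurableSpace X] (ν : Measure X) [SigmaFinite ν] (hν : ν ≠ 0)
    {H : Type*} [NormedAddCommGroup H] [InnerProductSpace ℝ H] [FiniteDimensional ℝ H]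
    [MeasurableSpace H] [BorelSpace H]
    (Γ : X → H) (hΓ : Measurable Γ)
    (Θ : Set H) (hΘ : Θ = {θ : H | Integrable (fun x => exp ⟪θ, Γ x⟫) ν})
    (A : H → ℝ) (hA : ∀ θ, A θ = log (∫ x, exp ⟪θ, Γ x⟫ ∂ν))
    (q : H → X → ℝ) (hq : ∀ θ x, q θ x = exp (⟪θ, Γ x⟫ - A θ))
    (p : X → ℝ) (hpmeas : Measurable p) (hp0 : ∀ x, 0 ≤ p x)
    (hp1 : ∫ x, p x ∂ν = 1)
    (α : ℝ) (hα : α ∈ Set.Ioo (0:ℝ) 1)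
    (f : H → ℝ)
    (hf : ∀ θ, f θ = (1/(α-1)) * log (∫ x, p x ^ α * q θ x ^ (1-α) ∂ν)) :
    ∀ θ ∈ interior Θ,
      Integrable (fun x => q θ x • Γ x) ν ∧
      Integrable (fun x => (p x ^ α * q θ x ^ (1-α)) • Γ x) ν ∧
      HasGradientAt f
        ((∫ x, q θ x • Γ x ∂ν)
          - (∫ x, p x ^ α * q θ x ^ (1-α) ∂ν)⁻¹ •
            (∫ x, (p x ^ α * q θ x ^ (1-α)) • Γ x ∂ν)) θ :=
  statement4_general ν Γ hΓ Θ hΘ A hA q hq p hp0 hp1 α hα f hf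
end

section
/- Let π : X → [0,∞) be measurable with ∫ π dν = 1 and let α ∈ (0,1). For θ ∈ Θ define f(θ) = (1/(α−1)) · log ∫ π(x)^α q_θ(x)^{1−α} ν(dx) (finite by Hölder's inequality). Then the function θ ↦ A(θ) − f(θ) is convex on Θ; that is, f is 1-relatively smooth with respect to the log-partition function A. -/
/-!
With `Z(θ) = ∫ p^α exp((1-α)⟪θ, Γ⟫) dν`, factoring `exp(-(1-α) A θ)` out of the Rényi integral
gives `A θ - f θ = (1-α)⁻¹ log Z(θ)`. Now `log Z` is the log-partition function of the exponential
family with base measure `p^α ν` and statistic `(1-α) Γ`, and log-partition functions are convex by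
Hölder's inequality: `exp ⟪a θ₁ + b θ₂, T⟫ = (exp ⟪θ₁, T⟫)^a (exp ⟪θ₂, T⟫)^b`.
-/

open MeasureTheory Real
open scoped RealInnerProductSpace NNReal ENNReal

namespace MeasureTheory

variable {X : Type*} [MeasurableSpace X] {μ : Measure X} {f g : X → ℝ}

theorem Integrable.rpow_mul_rpow_s5 (hf : Integrable f μ) (hg : Integrable g μ)
    (hf0 : 0 ≤ᵐ[μ] f) (hg0 : 0 ≤ᵐ[μ] g) {a b : ℝ} (ha : 0 ≤ a) (hb : 0 ≤ b) (hab : a + b = 1) :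
    Integrable (fun x => f x ^ a * g x ^ b) μ := by
  refine ((hf.const_mul a).add (hg.const_mul b)).mono'
    ((hf.aemeasurable.pow_const a).mul (hg.aemeasurable.pow_const b)).aestronglyMeasurable ?_
  filter_upwards [hf0, hg0] with x hfx hgx
  rw [Real.norm_of_nonneg (mul_nonneg (rpow_nonneg hfx a) (rpow_nonneg hgx b))]
  exact geom_mean_le_arith_mean2_weighted ha hb hfx hgx hab

theorem Integrable.memLp_rpow (hf : Integrable f μ) (hf0 : 0 ≤ᵐ[μ] f) {a : ℝ} (ha : 0 < a) :
    MemLp (fun x => f x ^ a) (ENNReal.ofReal (1 / a)) μ := by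
  have h := (memLp_one_iff_integrable.2 hf).norm_rpow_div (ENNReal.ofReal a)
  rw [ENNReal.toReal_ofReal ha.le, ← ENNReal.ofReal_one, ← ENNReal.ofReal_div_of_pos ha] at h
  refine h.ae_eq ?_
  filter_upwards [hf0] with x hx
  rw [Real.norm_of_nonneg hx]

theorem integral_rpow_mul_rpow_le (hf : Integrable f μ) (hg : Integrable g μ)
    (hf0 : 0 ≤ᵐ[μ] f) (hg0 : 0 ≤ᵐ[μ] g) {a b : ℝ} (ha : 0 < a) (hb : 0 < b) (hab : a + b = 1) :
    ∫ x, f x ^ a * g x ^ b ∂μ ≤ (∫ x, f x ∂μ) ^ a * (∫ x, g x ∂μ) ^ b := by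
  have hpow_inv : ∀ {h : X → ℝ} {c : ℝ}, 0 ≤ᵐ[μ] h → c ≠ 0 →
      ∫ x, (h x ^ c) ^ (1 / c) ∂μ = ∫ x, h x ∂μ := fun h0 hc =>
    integral_congr_ae <| by
      filter_upwards [h0] with x hx
      rw [← Real.rpow_mul hx, mul_one_div_cancel hc, Real.rpow_one]
  have holder := integral_mul_le_Lp_mul_Lq_of_nonneg (Real.holderConjugate_one_div ha hb hab)
    (by filter_upwards [hf0] with x hx using Real.rpow_nonneg hx a)
    (by filter_upwards [hg0] with x hx using Real.rpow_nonneg hx b)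
    (hf.memLp_rpow hf0 ha) (hg.memLp_rpow hg0 hb)
  rwa [hpow_inv hf0 ha.ne', hpow_inv hg0 hb.ne', one_div_one_div, one_div_one_div] at holder

theorem neZero_withDensity_toNNReal_rpow {p : X → ℝ} (hp0 : ∀ x, 0 ≤ p x)
    (hp : ∫ x, p x ∂μ ≠ 0) {α : ℝ} (hα : α ≠ 0) :
    NeZero (μ.withDensity fun x => ((p x ^ α).toNNReal : ℝ≥0∞)) := by
  refine ⟨fun hμ0 => hp (integral_eq_zero_of_ae ?_)⟩
  have hw := ((Integrable.of_integral_ne_zero hp).aemeasurable.pow_const α).real_toNNReal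
  filter_upwards [(withDensity_eq_zero_iff hw.coe_nnreal_ennreal).1 hμ0] with x hx
  have hpx : p x ^ α = 0 := by
    simpa [Real.coe_toNNReal _ (rpow_nonneg (hp0 x) α)] using congrArg ENNReal.toReal hx
  exact (rpow_eq_zero (hp0 x) hα).1 hpx

end MeasureTheory

section ExponentialFamily

variable {X : Type*} {H : Type*} [NormedAddCommGroup H] [InnerProductSpace ℝ H]

theorem exp_inner_add_smul_eq_rpow_mul_rpow (θ₁ θ₂ v : H) (a b : ℝ) :
    exp ⟪a • θ₁ + b • θ₂, v⟫ = exp ⟪θ₁, v⟫ ^ a * exp ⟪θ₂, v⟫ ^ b := by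
  rw [inner_add_left, real_inner_smul_left, real_inner_smul_left, exp_add, mul_comm a,
    mul_comm b, exp_mul, exp_mul]

theorem smul_exp_inner_smul (w : X → ℝ≥0) (T : X → H) (c : ℝ) (θ : H) :
    (fun x => w x • exp ⟪θ, (c • T) x⟫) = fun x => w x * exp ⟪θ, T x⟫ ^ c := by
  ext x
  rw [Pi.smul_apply, real_inner_smul_right, mul_comm c, exp_mul, NNReal.smul_def, smul_eq_mul]

variable [MeasurableSpace X]

def natParamSpace (μ : Measure X) (T : X → H) : Set H :=
  {θ | Integrable (fun x => exp ⟪θ, T x⟫) μ}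

noncomputable def logPartition (μ : Measure X) (T : X → H) (θ : H) : ℝ :=
  log (∫ x, exp ⟪θ, T x⟫ ∂μ)

variable (μ : Measure X) (T : X → H)

theorem convex_natParamSpace : Convex ℝ (natParamSpace μ T) := by
  intro θ₁ h₁ θ₂ h₂ a b ha hb hab
  simp only [natParamSpace, Set.mem_ofPred_eq, exp_inner_add_smul_eq_rpow_mul_rpow] at h₁ h₂ ⊢
  exact h₁.rpow_mul_rpow_s5 h₂ (.of_forall fun _ => (exp_pos _).le)
    (.of_forall fun _ => (exp_pos _).le) ha hb hab

theorem convexOn_logPartition : ConvexOn ℝ (natParamSpace μ T) (logPartition μ T) := by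
  rcases eq_zero_or_neZero μ with rfl | hμ
  · exact (convexOn_const 0 (convex_natParamSpace 0 T)).congr fun θ _ => by simp [logPartition]
  refine convexOn_iff_forall_pos.2 ⟨convex_natParamSpace μ T, ?_⟩
  intro θ₁ h₁ θ₂ h₂ a b ha hb hab
  have hZ₁ := integral_exp_pos h₁
  have hZ₂ := integral_exp_pos h₂
  have hZ := integral_exp_pos (convex_natParamSpace μ T h₁ h₂ ha.le hb.le hab)
  simp only [logPartition, smul_eq_mul] at hZ ⊢
  calc log (∫ x, exp ⟪a • θ₁ + b • θ₂, T x⟫ ∂μ)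
      ≤ log ((∫ x, exp ⟪θ₁, T x⟫ ∂μ) ^ a * (∫ x, exp ⟪θ₂, T x⟫ ∂μ) ^ b) := by
        refine log_le_log hZ ?_
        simp only [exp_inner_add_smul_eq_rpow_mul_rpow]
        exact integral_rpow_mul_rpow_le h₁ h₂ (.of_forall fun _ => (exp_pos _).le)
          (.of_forall fun _ => (exp_pos _).le) ha hb hab
    _ = a * log (∫ x, exp ⟪θ₁, T x⟫ ∂μ) + b * log (∫ x, exp ⟪θ₂, T x⟫ ∂μ) := by
        rw [log_mul (rpow_pos_of_pos hZ₁ a).ne' (rpow_pos_of_pos hZ₂ b).ne', log_rpow hZ₁,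
          log_rpow hZ₂]

variable {μ T} {w : X → ℝ≥0}

theorem mem_natParamSpace_withDensity_smul_iff (hw : AEMeasurable w μ) (c : ℝ) (θ : H) :
    θ ∈ natParamSpace (μ.withDensity fun x => w x) (c • T) ↔
      Integrable (fun x => w x * exp ⟪θ, T x⟫ ^ c) μ := by
  rw [natParamSpace, Set.mem_ofPred_eq, integrable_withDensity_iff_integrable_smul₀ hw,
    smul_exp_inner_smul]

theorem integral_exp_inner_smul_withDensity (hw : AEMeasurable w μ) (c : ℝ) (θ : H) :
    ∫ x, exp ⟪θ, (c • T) x⟫ ∂μ.withDensity (fun x => w x) = ∫ x, w x * exp ⟪θ, T x⟫ ^ c ∂μ := by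
  rw [integral_withDensity_eq_integral_smul₀ hw, smul_exp_inner_smul]

end ExponentialFamily

theorem integral_mul_exp_sub_rpow {X : Type*} [MeasurableSpace X] (μ : Measure X) (g u : X → ℝ)
    (a b : ℝ) :
    ∫ x, g x * exp (u x - a) ^ b ∂μ = exp (-(b * a)) * ∫ x, g x * exp (u x) ^ b ∂μ := by
  rw [← integral_const_mul]
  congr 1 with x
  rw [← exp_mul, ← exp_mul, show (u x - a) * b = u x * b + -(b * a) by ring, exp_add]
  ring

theorem statement5_general
    {X : Type*} [MeasurableSpace X] (ν : Measure X)
    {H : Type*} [NormedAddCommGroup H] [InnerProductSpace ℝ H]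
    (Γ : X → H)
    (Θ : Set H) (hΘ : Θ = {θ : H | Integrable (fun x => exp ⟪θ, Γ x⟫) ν})
    (A : H → ℝ)
    (q : H → X → ℝ) (hq : ∀ θ x, q θ x = exp (⟪θ, Γ x⟫ - A θ))
    (p : X → ℝ) (hp0 : ∀ x, 0 ≤ p x)
    (hp1 : ∫ x, p x ∂ν = 1)
    (α : ℝ) (hα : α ∈ Set.Ioo (0:ℝ) 1)
    (f : H → ℝ)
    (hf : ∀ θ, f θ = (1/(α-1)) * log (∫ x, p x ^ α * q θ x ^ (1-α) ∂ν)) :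
    ConvexOn ℝ Θ (fun θ => A θ - f θ) := by
  subst hΘ
  obtain ⟨hα0, hα1⟩ := hα
  have hp : Integrable p ν := .of_integral_ne_zero (by rw [hp1]; exact one_ne_zero)
  let w : X → ℝ≥0 := fun x => (p x ^ α).toNNReal
  have hw : AEMeasurable w ν := (hp.aemeasurable.pow_const α).real_toNNReal
  have hwp : ∀ x, (w x : ℝ) = p x ^ α := fun x => Real.coe_toNNReal _ (rpow_nonneg (hp0 x) α)
  let μ := ν.withDensity fun x => w x
  have hμ : NeZero μ := neZero_withDensity_toNNReal_rpow hp0 (by simp [hp1]) hα0.ne'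
  have hΘμ : natParamSpace ν Γ ⊆ natParamSpace μ ((1 - α) • Γ) := fun θ hθ => by
    rw [mem_natParamSpace_withDensity_smul_iff hw]
    simp_rw [hwp]
    exact hp.rpow_mul_rpow_s5 hθ (.of_forall hp0) (.of_forall fun _ => (exp_pos _).le)
      hα0.le (sub_nonneg.2 hα1.le) (add_sub_cancel α 1)
  have hAf : Set.EqOn (fun θ => (1 - α)⁻¹ • logPartition μ ((1 - α) • Γ) θ)
      (fun θ => A θ - f θ) (natParamSpace ν Γ) := fun θ hθ => by
    have hZ := integral_exp_pos (hΘμ hθ)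
    simp only [logPartition, smul_eq_mul, μ, integral_exp_inner_smul_withDensity hw, hwp] at hZ ⊢
    simp only [hf, hq, integral_mul_exp_sub_rpow, log_mul (exp_pos _).ne' hZ.ne', log_exp]
    have hα1' : α - 1 ≠ 0 := (sub_neg.2 hα1).ne
    have h1α : 1 - α ≠ 0 := (sub_pos.2 hα1).ne'
    field_simp
    ring
  exact (((convexOn_logPartition μ _).subset hΘμ (convex_natParamSpace ν Γ)).smul
    (inv_nonneg.2 (sub_nonneg.2 hα1.le))).congr hAf

/-- For a probability density `p` and `α ∈ (0,1)`, the Rényi objective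
`f θ = (1/(α-1)) log ∫ p^α q_θ^{1-α} dν` is 1-relatively smooth with respect to the
log-partition function `A`: the function `θ ↦ A θ - f θ` is convex on `Θ`. -/
theorem statement5
    {X : Type*} [MeasurableSpace X] (ν : Measure X) [SigmaFinite ν] (hν : ν ≠ 0)
    {H : Type*} [NormedAddCommGroup H] [InnerProductSpace ℝ H] [FiniteDimensional ℝ H]
    [MeasurableSpace H] [BorelSpace H]
    (Γ : X → H) (hΓ : Measurable Γ)
    (Θ : Set H) (hΘ : Θ = {θ : H | Integrable (fun x => exp ⟪θ, Γ x⟫) ν})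
    (A : H → ℝ) (hA : ∀ θ, A θ = log (∫ x, exp ⟪θ, Γ x⟫ ∂ν))
    (q : H → X → ℝ) (hq : ∀ θ x, q θ x = exp (⟪θ, Γ x⟫ - A θ))
    (p : X → ℝ) (hpmeas : Measurable p) (hp0 : ∀ x, 0 ≤ p x)
    (hp1 : ∫ x, p x ∂ν = 1)
    (α : ℝ) (hα : α ∈ Set.Ioo (0:ℝ) 1)
    (f : H → ℝ)
    (hf : ∀ θ, f θ = (1/(α-1)) * log (∫ x, p x ^ α * q θ x ^ (1-α) ∂ν)) :
    ConvexOn ℝ Θ (fun θ => A θ - f θ) :=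
  statement5_general ν Γ Θ hΘ A q hq p hp0 hp1 α hα f hf
end

section
/- Let π : X → [0,∞) be measurable with ∫ π dν = 1 and let α > 1. Let D = {θ ∈ Θ : ∫ π(x)^α q_θ(x)^{1−α} ν(dx) < ∞} and for θ ∈ D define f(θ) = (1/(α−1)) · log ∫ π(x)^α q_θ(x)^{1−α} ν(dx) (the Rényi divergence RD_α(π, q_θ)). Then D is convex and the function θ ↦ f(θ) − A(θ) is convex on D; that is, f is 1-relatively strongly convex with respect to the log-partition function A. -/
/-!
Writing `q_θ = exp (⟪θ, Γ⟫ - A θ)`, the factor `exp ((α - 1) A θ)` comes out of the Rényi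
integral, so `f θ - A θ = (α - 1)⁻¹ log ∫ exp ⟪(1 - α) θ, Γ⟫ d(p^α ν)`. This is the
log-partition function of the tilted measure `p^α ν`, composed with a linear map and scaled by
a positive constant. Log-partition functions are convex on their (convex) domains by Hölder's
inequality: `∫ e^{⟪a u + b v, Γ⟫} ≤ (∫ e^{⟪u, Γ⟫})^a (∫ e^{⟪v, Γ⟫})^b` for `a + b = 1`.
-/

open MeasureTheory Real
open scoped RealInnerProductSpace ENNReal

lemma ofReal_exp_inner_smul_add_smul {H : Type*} [NormedAddCommGroup H] [InnerProductSpace ℝ H]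
    (a b : ℝ) (u v y : H) :
    ENNReal.ofReal (exp ⟪a • u + b • v, y⟫) =
      ENNReal.ofReal (exp ⟪u, y⟫) ^ a * ENNReal.ofReal (exp ⟪v, y⟫) ^ b := by
  rw [ENNReal.ofReal_rpow_of_pos (exp_pos _), ENNReal.ofReal_rpow_of_pos (exp_pos _),
    ← ENNReal.ofReal_mul (by positivity), ← exp_mul, ← exp_mul, ← exp_add, inner_add_left,
    real_inner_smul_left, real_inner_smul_left, mul_comm a, mul_comm b]

section LogPartition

variable {X : Type*} [MeasurableSpace X] (μ : Measure X)
  {H : Type*} [NormedAddCommGroup H] [InnerProductSpace ℝ H]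
  [MeasurableSpace H] [OpensMeasurableSpace H] {Γ : X → H}

lemma measurable_exp_inner (hΓ : Measurable Γ) (u : H) : Measurable fun x => exp ⟪u, Γ x⟫ :=
  ((innerSL ℝ u).continuous.measurable.comp hΓ).exp

lemma lintegral_exp_inner_convexComb_le (hΓ : Measurable Γ) {a b : ℝ} (ha : 0 ≤ a)
    (hb : 0 ≤ b) (hab : a + b = 1) (u v : H) :
    ∫⁻ x, ENNReal.ofReal (exp ⟪a • u + b • v, Γ x⟫) ∂μ ≤
      (∫⁻ x, ENNReal.ofReal (exp ⟪u, Γ x⟫) ∂μ) ^ a *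
        (∫⁻ x, ENNReal.ofReal (exp ⟪v, Γ x⟫) ∂μ) ^ b := by
  simp only [ofReal_exp_inner_smul_add_smul]
  exact ENNReal.lintegral_mul_norm_pow_le (measurable_exp_inner hΓ u).ennreal_ofReal.aemeasurable
    (measurable_exp_inner hΓ v).ennreal_ofReal.aemeasurable ha hb hab

lemma lintegral_exp_inner_ne_top_iff (hΓ : Measurable Γ) (u : H) :
    ∫⁻ x, ENNReal.ofReal (exp ⟪u, Γ x⟫) ∂μ ≠ ∞ ↔ Integrable (fun x => exp ⟪u, Γ x⟫) μ :=
  lintegral_ofReal_ne_top_iff_integrable (measurable_exp_inner hΓ u).aestronglyMeasurable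
    (.of_forall fun _ => (exp_pos _).le)

lemma convex_setOf_integrable_exp_inner (hΓ : Measurable Γ) :
    Convex ℝ {u : H | Integrable (fun x => exp ⟪u, Γ x⟫) μ} := by
  intro u hu v hv a b ha hb hab
  simp only [Set.mem_ofPred_eq, ← lintegral_exp_inner_ne_top_iff μ hΓ] at hu hv ⊢
  exact ne_top_of_le_ne_top (by finiteness) (lintegral_exp_inner_convexComb_le μ hΓ ha hb hab u v)

lemma integral_exp_inner_convexComb_le (hΓ : Measurable Γ) {a b : ℝ} (ha : 0 ≤ a) (hb : 0 ≤ b)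
    (hab : a + b = 1) {u v : H} (hu : Integrable (fun x => exp ⟪u, Γ x⟫) μ)
    (hv : Integrable (fun x => exp ⟪v, Γ x⟫) μ) :
    ∫ x, exp ⟪a • u + b • v, Γ x⟫ ∂μ ≤
      (∫ x, exp ⟪u, Γ x⟫ ∂μ) ^ a * (∫ x, exp ⟪v, Γ x⟫ ∂μ) ^ b := by
  have hint : ∀ w : H, ∫ x, exp ⟪w, Γ x⟫ ∂μ = (∫⁻ x, ENNReal.ofReal (exp ⟪w, Γ x⟫) ∂μ).toReal :=
    fun w => integral_eq_lintegral_of_nonneg_ae (.of_forall fun _ => (exp_pos _).le)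
      (measurable_exp_inner hΓ w).aestronglyMeasurable
  rw [← lintegral_exp_inner_ne_top_iff μ hΓ] at hu hv
  rw [hint, hint, hint, ENNReal.toReal_rpow, ENNReal.toReal_rpow, ← ENNReal.toReal_mul]
  exact ENNReal.toReal_mono (by finiteness) (lintegral_exp_inner_convexComb_le μ hΓ ha hb hab u v)

lemma convexOn_log_integral_exp_inner (hΓ : Measurable Γ) :
    ConvexOn ℝ {u : H | Integrable (fun x => exp ⟪u, Γ x⟫) μ}
      (fun u => log (∫ x, exp ⟪u, Γ x⟫ ∂μ)) := by
  rcases eq_or_ne μ 0 with rfl | hμ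
  · simpa using convexOn_const (0 : ℝ) (convex_setOf_integrable_exp_inner (0 : Measure X) hΓ)
  have : NeZero μ := ⟨hμ⟩
  refine ⟨convex_setOf_integrable_exp_inner μ hΓ, fun u hu v hv a b ha hb hab => ?_⟩
  have huv := convex_setOf_integrable_exp_inner μ hΓ hu hv ha hb hab
  have hu₀ := integral_exp_pos hu
  have hv₀ := integral_exp_pos hv
  calc log (∫ x, exp ⟪a • u + b • v, Γ x⟫ ∂μ)
      ≤ log ((∫ x, exp ⟪u, Γ x⟫ ∂μ) ^ a * (∫ x, exp ⟪v, Γ x⟫ ∂μ) ^ b) :=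
        log_le_log (integral_exp_pos huv) (integral_exp_inner_convexComb_le μ hΓ ha hb hab hu hv)
    _ = a • log (∫ x, exp ⟪u, Γ x⟫ ∂μ) + b • log (∫ x, exp ⟪v, Γ x⟫ ∂μ) := by
        rw [log_mul (by positivity) (by positivity), log_rpow hu₀, log_rpow hv₀, smul_eq_mul,
          smul_eq_mul]

end LogPartition

section Tilted

variable {X : Type*} [MeasurableSpace X] {ν : Measure X} {w : X → ℝ}

lemma integrable_withDensity_ofReal_iff (hw : Measurable w) (hw₀ : ∀ x, 0 ≤ w x) {g : X → ℝ} :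
    Integrable g (ν.withDensity fun x => ENNReal.ofReal (w x)) ↔
      Integrable (fun x => w x * g x) ν := by
  rw [integrable_withDensity_iff_integrable_smul' hw.ennreal_ofReal
    (.of_forall fun _ => ENNReal.ofReal_lt_top)]
  simp only [ENNReal.toReal_ofReal, hw₀, smul_eq_mul]

lemma integral_withDensity_ofReal (hw : Measurable w) (hw₀ : ∀ x, 0 ≤ w x) (g : X → ℝ) :
    ∫ x, g x ∂ν.withDensity (fun x => ENNReal.ofReal (w x)) = ∫ x, w x * g x ∂ν := by
  rw [integral_withDensity_eq_integral_toReal_smul hw.ennreal_ofReal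
    (.of_forall fun _ => ENNReal.ofReal_lt_top)]
  simp only [ENNReal.toReal_ofReal, hw₀, smul_eq_mul]

lemma withDensity_ofReal_rpow_ne_zero {p : X → ℝ} (hp : Measurable p) (hp₀ : ∀ x, 0 ≤ p x)
    (hpν : ∫ x, p x ∂ν ≠ 0) {α : ℝ} (hα : 0 < α) :
    ν.withDensity (fun x => ENNReal.ofReal (p x ^ α)) ≠ 0 := by
  rw [Ne, withDensity_eq_zero_iff (hp.pow_const α).ennreal_ofReal.aemeasurable]
  refine fun h => hpν (integral_eq_zero_of_ae ?_)
  filter_upwards [h] with x hx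
  simp only [Pi.zero_apply, ENNReal.ofReal_eq_zero] at hx ⊢
  exact (rpow_eq_zero (hp₀ x) hα.ne').mp (le_antisymm hx (rpow_nonneg (hp₀ x) α))

end Tilted

lemma mul_exp_sub_rpow (y t c α : ℝ) :
    y * exp (t - c) ^ (1 - α) = exp ((α - 1) * c) * (y * exp ((1 - α) * t)) := by
  rw [← exp_mul, mul_left_comm, ← exp_add]
  ring_nf

theorem statement6_general
    {X : Type*} [MeasurableSpace X] (ν : Measure X)
    {H : Type*} [NormedAddCommGroup H] [InnerProductSpace ℝ H]
    [MeasurableSpace H] [BorelSpace H]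
    (Γ : X → H) (hΓ : Measurable Γ)
    (Θ : Set H) (hΘ : Θ = {θ : H | Integrable (fun x => exp ⟪θ, Γ x⟫) ν})
    (A : H → ℝ)
    (q : H → X → ℝ) (hq : ∀ θ x, q θ x = exp (⟪θ, Γ x⟫ - A θ))
    (p : X → ℝ) (hpmeas : Measurable p) (hp0 : ∀ x, 0 ≤ p x)
    (hp1 : ∫ x, p x ∂ν = 1)
    (α : ℝ) (hα : 1 < α)
    (D : Set H)
    (hD : D = {θ ∈ Θ | Integrable (fun x => p x ^ α * q θ x ^ (1-α)) ν})
    (f : H → ℝ)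
    (hf : ∀ θ, f θ = (1/(α-1)) * log (∫ x, p x ^ α * q θ x ^ (1-α) ∂ν)) :
    Convex ℝ D ∧ ConvexOn ℝ D (fun θ => f θ - A θ) := by
  have hpα : Measurable fun x => p x ^ α := hpmeas.pow_const α
  have hpα₀ : ∀ x, 0 ≤ p x ^ α := fun x => rpow_nonneg (hp0 x) α
  set μ := ν.withDensity fun x => ENNReal.ofReal (p x ^ α)
  have : NeZero μ :=
    ⟨withDensity_ofReal_rpow_ne_zero hpmeas hp0 (by simp [hp1]) (by linarith)⟩
  have hintegrand : ∀ θ, (fun x => p x ^ α * q θ x ^ (1 - α)) =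
      fun x => exp ((α - 1) * A θ) * (p x ^ α * exp ⟪(1 - α) • θ, Γ x⟫) := by
    intro θ
    ext x
    rw [hq, mul_exp_sub_rpow, real_inner_smul_left]
  set L : H →ₗ[ℝ] H := (1 - α) • LinearMap.id
  have hD' : D = Θ ∩ L ⁻¹' {u | Integrable (fun x => exp ⟪u, Γ x⟫) μ} := by
    ext θ
    simp [hD, hintegrand, integrable_const_mul_iff, integrable_withDensity_ofReal_iff hpα hpα₀, L, μ]
  have hDconv : Convex ℝ D := hD' ▸ (hΘ ▸ convex_setOf_integrable_exp_inner ν hΓ).inter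
    ((convex_setOf_integrable_exp_inner μ hΓ).linear_preimage L)
  have hconv := ((convexOn_log_integral_exp_inner μ hΓ).comp_linearMap L).smul
    (one_div_pos.mpr (sub_pos.mpr hα)).le
  refine ⟨hDconv, (hconv.subset (hD' ▸ Set.inter_subset_right) hDconv).congr fun θ hθ => ?_⟩
  have hθ : Integrable (fun x => exp ⟪(1 - α) • θ, Γ x⟫) μ := by simpa [L] using (hD' ▸ hθ).2
  simp only [hf, hintegrand, integral_const_mul, ← integral_withDensity_ofReal hpα hpα₀, L,
    Function.comp_apply, LinearMap.smul_apply, LinearMap.id_apply, smul_eq_mul]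
  rw [log_mul (exp_ne_zero _) (integral_exp_pos hθ).ne', log_exp]
  have hα₁ : α - 1 ≠ 0 := (sub_pos.mpr hα).ne'
  field_simp
  ring

/-- For a probability density `p` and `α > 1`, the effective domain
`D = {θ ∈ Θ : ∫ p^α q_θ^{1-α} dν < ∞}` of the Rényi objective `f` is convex, and `f`
is 1-relatively strongly convex with respect to `A`: `θ ↦ f θ - A θ` is convex on `D`. -/
theorem statement6
    {X : Type*} [MeasurableSpace X] (ν : Measure X) [SigmaFinite ν] (hν : ν ≠ 0)
    {H : Type*} [NormedAddCommGroup H] [InnerProductSpace ℝ H] [FiniteDimensional ℝ H]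
    [MeasurableSpace H] [BorelSpace H]
    (Γ : X → H) (hΓ : Measurable Γ)
    (Θ : Set H) (hΘ : Θ = {θ : H | Integrable (fun x => exp ⟪θ, Γ x⟫) ν})
    (A : H → ℝ) (hA : ∀ θ, A θ = log (∫ x, exp ⟪θ, Γ x⟫ ∂ν))
    (q : H → X → ℝ) (hq : ∀ θ x, q θ x = exp (⟪θ, Γ x⟫ - A θ))
    (p : X → ℝ) (hpmeas : Measurable p) (hp0 : ∀ x, 0 ≤ p x)
    (hp1 : ∫ x, p x ∂ν = 1)
    (α : ℝ) (hα : 1 < α)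
    (D : Set H)
    (hD : D = {θ ∈ Θ | Integrable (fun x => p x ^ α * q θ x ^ (1-α)) ν})
    (f : H → ℝ)
    (hf : ∀ θ, f θ = (1/(α-1)) * log (∫ x, p x ^ α * q θ x ^ (1-α) ∂ν)) :
    Convex ℝ D ∧ ConvexOn ℝ D (fun θ => f θ - A θ) :=
  statement6_general ν Γ hΓ Θ hΘ A q hq p hpmeas hp0 hp1 α hα D hD f hf
end

section
/- As θ → θπ, the function g admits the quadratic expansion g(θ) − (α/2) · ⟨∇²A(θπ)(θ − θπ), θ − θπ⟩ = o(‖θ − θπ‖²), where ∇²A(θπ) denotes the second derivative (Hessian) of A at θπ regarded as a self-adjoint linear map on H. -/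
open Topology Asymptotics
open scoped RealInnerProductSpace

/-!
Write `T h = A (θπ + h) - A θπ - A'(θπ) h - ½ A''(θπ)(h, h)` for the second-order Taylor remainder,
which is `o(‖h‖²)` by the mean value inequality applied to `T`, whose derivative is `o(‖h‖)`.
Expanding `g` to second order, the zeroth- and first-order terms cancel and what is left is
`g θ - (α/2) A''(θπ)(h, h) = T h - T ((1-α) h) / (1-α)` with `h = θ - θπ`, a combination of two
`o(‖h‖²)` terms.
-/

section TaylorRemainder

variable {E F : Type*} [NormedAddCommGroup E] [NormedSpace ℝ E] [NormedAddCommGroup F]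

theorem Asymptotics.IsLittleO.comp_smul_norm_pow {φ : E → F} {n : ℕ}
    (hφ : φ =o[𝓝 0] fun h => ‖h‖ ^ n) (c : ℝ) :
    (fun h => φ (c • h)) =o[𝓝 0] fun h => ‖h‖ ^ n := by
  have hc : Filter.Tendsto (fun h : E => c • h) (𝓝 0) (𝓝 0) := by
    simpa using (Filter.tendsto_id (x := 𝓝 (0 : E))).const_smul c
  refine (hφ.comp_tendsto hc).trans_isBigO ?_
  simp only [Function.comp_def, norm_smul, mul_pow]
  exact (isBigO_refl _ _).const_mul_left _

variable [NormedSpace ℝ F]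

theorem isLittleO_norm_pow_succ_of_hasFDerivAt {R : E → F} {R' : E → E →L[ℝ] F} {n : ℕ}
    (hR : ∀ᶠ v in 𝓝 0, HasFDerivAt R (R' v) v) (hR0 : R 0 = 0)
    (hR' : R' =o[𝓝 0] fun v => ‖v‖ ^ n) :
    R =o[𝓝 0] fun h => ‖h‖ ^ (n + 1) := by
  refine isLittleO_iff.2 fun ε hε => ?_
  obtain ⟨δ, hδ, hball⟩ := Metric.eventually_nhds_iff_ball.1 (hR.and (isLittleO_iff.1 hR' hε))
  refine Metric.eventually_nhds_iff_ball.2 ⟨δ, hδ, fun h hh => ?_⟩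
  have hsub : Metric.closedBall (0 : E) ‖h‖ ⊆ Metric.ball 0 δ :=
    Metric.closedBall_subset_ball (by simpa using hh)
  have hbound : ∀ v ∈ Metric.closedBall (0 : E) ‖h‖, ‖R' v‖ ≤ ε * ‖h‖ ^ n := by
    intro v hv
    have hv' : ‖v‖ ≤ ‖h‖ := by simpa using hv
    calc ‖R' v‖ ≤ ε * ‖‖v‖ ^ n‖ := (hball v (hsub hv)).2
      _ ≤ ε * ‖h‖ ^ n := by rw [norm_pow, norm_norm]; gcongr
  have hmvt := (convex_closedBall (0 : E) ‖h‖).norm_image_sub_le_of_norm_hasFDerivWithin_le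
    (fun v hv => (hball v (hsub hv)).1.hasFDerivWithinAt) hbound
    (Metric.mem_closedBall_self (norm_nonneg h)) (show h ∈ Metric.closedBall 0 ‖h‖ by simp)
  rw [hR0, sub_zero, sub_zero] at hmvt
  calc ‖R h‖ ≤ ε * ‖h‖ ^ n * ‖h‖ := hmvt
    _ = ε * ‖‖h‖ ^ (n + 1)‖ := by rw [norm_pow, norm_norm, pow_succ, mul_assoc]

theorem isLittleO_sub_taylor_two_of_hasFDerivAt {f : E → F} {f' : E → E →L[ℝ] F}
    {f'' : E →L[ℝ] E →L[ℝ] F} {x : E}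
    (hf : ∀ᶠ y in 𝓝 x, HasFDerivAt f (f' y) y) (hf' : HasFDerivAt f' f'' x) :
    (fun h => f (x + h) - f x - f' x h - (1 / 2 : ℝ) • f'' h h) =o[𝓝 0] fun h => ‖h‖ ^ 2 := by
  have hsymm := second_derivative_symmetric_of_eventually hf hf'
  have hquad (v : E) : HasFDerivAt (fun h => (1 / 2 : ℝ) • f'' h h) (f'' v) v := by
    refine ((f''.hasFDerivAt_of_bilinear (hasFDerivAt_id v) (hasFDerivAt_id v)).const_smul
      (1 / 2 : ℝ)).congr_fderiv (ContinuousLinearMap.ext fun w => ?_)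
    simp only [id_eq, ContinuousLinearMap.precompR_apply, ContinuousLinearMap.compL_apply,
      ContinuousLinearMap.comp_id, smul_add, add_apply, smul_apply,
      ContinuousLinearMap.precompL_apply, ContinuousLinearMap.id_apply, hsymm w v]
    module
  have hshift : ∀ᶠ v in 𝓝 (0 : E), HasFDerivAt (fun h => f (x + h)) (f' (x + v)) v := by
    have := (continuous_const_add x).tendsto' 0 x (add_zero x)
    filter_upwards [this.eventually hf] with v hv
    simpa [Function.comp_def] using hv.comp v ((hasFDerivAt_id v).const_add x)
  refine isLittleO_norm_pow_succ_of_hasFDerivAt (R' := fun v => f' (x + v) - f' x - f'' v) (n := 1)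
    ?_ (by simp) ?_
  · filter_upwards [hshift] with v hv
    exact ((hv.sub_const (f x)).sub (f' x).hasFDerivAt).sub (hquad v)
  · simpa using (hasFDerivAt_iff_isLittleO_nhds_zero.1 hf').norm_right

end TaylorRemainder

theorem jensenGap_sub_quadratic_eq {E : Type*} [AddCommGroup E] [Module ℝ E]
    (A : E → ℝ) (L : E →ₗ[ℝ] ℝ) (B : E →ₗ[ℝ] E →ₗ[ℝ] ℝ) (x h : E) {α : ℝ} (hα : α ≠ 1) :
    let T : E → ℝ := fun h => A (x + h) - A x - L h - (1 / 2 : ℝ) • B h h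
    1 / (1 - α) * (α * A x + (1 - α) * A (x + h) - A (α • x + (1 - α) • (x + h)))
        - α / 2 * B h h = T h - 1 / (1 - α) * T ((1 - α) • h) := by
  have hα' : 1 - α ≠ 0 := sub_ne_zero.2 hα.symm
  have hx : α • x + (1 - α) • (x + h) = x + (1 - α) • h := by module
  simp only [hx, map_smul, LinearMap.smul_apply, smul_eq_mul]
  field_simp
  ring

theorem statement10_general
    {H : Type*} [NormedAddCommGroup H] [InnerProductSpace ℝ H]
    (U : Set H) (hUo : IsOpen U)
    (A : H → ℝ) (hA : ContDiffOn ℝ 2 A U)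
    (θπ : H) (hθπ : θπ ∈ U)
    (α : ℝ) (hα1 : α ≠ 1)
    (g : H → ℝ)
    (hg : ∀ θ, g θ = (1/(1-α)) * (α * A θπ + (1-α) * A θ - A (α • θπ + (1-α) • θ)))
    (Hess : H →L[ℝ] H)
    (hHess : ∀ v w : H, ⟪Hess v, w⟫ = iteratedFDerivWithin ℝ 2 A U θπ ![v, w]) :
    (fun θ => g θ - (α/2) * ⟪Hess (θ - θπ), θ - θπ⟫)
      =o[𝓝 θπ] (fun θ => ‖θ - θπ‖ ^ 2) := by
  have hAU : ∀ y ∈ U, ContDiffAt ℝ 2 A y := fun y hy => (hA y hy).contDiffAt (hUo.mem_nhds hy)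
  have hA' : ∀ᶠ y in 𝓝 θπ, HasFDerivAt A (fderiv ℝ A y) y := by
    filter_upwards [hUo.mem_nhds hθπ] with y hy
    exact ((hAU y hy).differentiableAt two_ne_zero).hasFDerivAt
  have hA'' : HasFDerivAt (fderiv ℝ A) (fderiv ℝ (fderiv ℝ A) θπ) θπ :=
    (((hAU θπ hθπ).fderiv_right (m := 1) le_rfl).differentiableAt one_ne_zero).hasFDerivAt
  have hHess' (v w : H) : ⟪Hess v, w⟫ = fderiv ℝ (fderiv ℝ A) θπ v w := by
    rw [hHess, iteratedFDerivWithin_of_isOpen 2 hUo hθπ, iteratedFDeriv_two_apply]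
    rfl
  have hT := isLittleO_sub_taylor_two_of_hasFDerivAt hA' hA''
  have hshift : Filter.Tendsto (· - θπ) (𝓝 θπ) (𝓝 0) :=
    tendsto_sub_nhds_zero_iff.2 Filter.tendsto_id
  refine ((hT.comp_tendsto hshift).sub (((hT.comp_smul_norm_pow (1 - α)).comp_tendsto
    hshift).const_mul_left (1 / (1 - α)))).congr_left fun θ => ?_
  have hgap := jensenGap_sub_quadratic_eq A (fderiv ℝ A θπ).toLinearMap
    (fderiv ℝ (fderiv ℝ A) θπ).toLinearMap₁₂ θπ (θ - θπ) hα1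
  rw [add_sub_cancel] at hgap
  simp only [Function.comp_apply, hg, hHess']
  exact hgap.symm

/-- Quadratic expansion of the Jensen-gap divergence
`g θ = (1/(1-α)) (α A θπ + (1-α) A θ - A (α θπ + (1-α) θ))` around `θπ`:
`g θ - (α/2) ⟪∇²A(θπ)(θ - θπ), θ - θπ⟫ = o(‖θ - θπ‖²)` as `θ → θπ`, where the Hessian
`∇²A(θπ)` is regarded as a (self-adjoint) continuous linear map on `H` identified with
the second derivative of `A` at `θπ`. -/
theorem statement10
    {H : Type*} [NormedAddCommGroup H] [InnerProductSpace ℝ H] [FiniteDimensional ℝ H]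
    (U : Set H) (hUo : IsOpen U)
    (A : H → ℝ) (hA : ContDiffOn ℝ 2 A U)
    (θπ : H) (hθπ : θπ ∈ U)
    (α : ℝ) (hα : 0 < α) (hα1 : α ≠ 1)
    (g : H → ℝ)
    (hg : ∀ θ, g θ = (1/(1-α)) * (α * A θπ + (1-α) * A θ - A (α • θπ + (1-α) • θ)))
    (Hess : H →L[ℝ] H)
    (hHess : ∀ v w : H, ⟪Hess v, w⟫ = iteratedFDerivWithin ℝ 2 A U θπ ![v, w]) :
    (fun θ => g θ - (α/2) * ⟪Hess (θ - θπ), θ - θπ⟫)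
      =o[𝓝 θπ] (fun θ => ‖θ - θπ‖ ^ 2) :=
  statement10_general U hUo A hA θπ hθπ α hα1 g hg Hess hHess
end

section
/- Assume the Hessian ∇²A(θπ), regarded as a self-adjoint linear map on H, is invertible with inverse J. Define G(θ) = ∇A(θ) − ∇A(α θπ + (1−α) θ), which is the gradient of g at θ. Then as θ → θπ, g(θ) − (1/(2α)) · ⟨J G(θ), G(θ)⟩ = o(‖θ − θπ‖²); in particular g satisfies the Polyak–Łojasiewicz-type inequality g(θ) ≤ (1/(2α)) · ⟨J G(θ), G(θ)⟩ + o(‖θ − θπ‖²) around θπ. -/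
/-!
Write `h = θ - θπ` and `H` for the Hessian. Expanding `A` to second order at `θπ`, both at `θ` and
at `α θπ + (1-α) θ = θπ + (1-α) h`, the first-order terms cancel in the Jensen gap and the
second-order ones leave `((1-α) - (1-α)²) / (1-α) = α` times `½ ⟪H h, h⟫`, so
`g θ = (α/2) ⟪H h, h⟫ + o(‖h‖²)`. Since `∇A` has derivative `H` at `θπ`, `G θ = α H h + o(‖h‖)`,
and `J H = id` turns this into `⟪J (G θ), G θ⟫ = α² ⟪h, H h⟫ + o(‖h‖²)`.
-/

open Topology Asymptotics Filter
open scoped RealInnerProductSpace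

section Taylor

variable {E F : Type*} [NormedAddCommGroup E] [NormedSpace ℝ E] [NormedAddCommGroup F]
  [NormedSpace ℝ F] {x : E}

theorem isLittleO_sub_sq_of_hasFDerivAt_isLittleO {f : E → F} {f' : E → E →L[ℝ] F}
    (hf : ∀ᶠ y in 𝓝 x, HasFDerivAt f (f' y) y) (hf' : f' =o[𝓝 x] fun y => y - x) :
    (fun y => f y - f x) =o[𝓝 x] fun y => ‖y - x‖ ^ 2 := by
  refine isLittleO_iff.2 fun ε hε => ?_
  obtain ⟨δ, hδ, hball⟩ := Metric.eventually_nhds_iff_ball.1 (hf.and (isLittleO_iff.1 hf' hε))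
  filter_upwards [Metric.ball_mem_nhds x hδ] with y hy
  have hsub : Metric.closedBall x ‖y - x‖ ⊆ Metric.ball x δ :=
    Metric.closedBall_subset_ball (by rwa [← dist_eq_norm])
  have hbound : ∀ z ∈ Metric.closedBall x ‖y - x‖, ‖f' z‖ ≤ ε * ‖y - x‖ := fun z hz =>
    (hball z (hsub hz)).2.trans <| by
      gcongr; simpa [dist_eq_norm] using hz
  have hy' : y ∈ Metric.closedBall x ‖y - x‖ := by simp [dist_eq_norm]
  have hmvt := (convex_closedBall x ‖y - x‖).norm_image_sub_le_of_norm_hasFDerivWithin_le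
    (fun z hz => (hball z (hsub hz)).1.hasFDerivWithinAt) hbound
    (Metric.mem_closedBall_self (norm_nonneg _)) hy'
  rwa [norm_pow, norm_norm, sq, ← mul_assoc]

theorem hasFDerivAt_bilinear_diag {B : E →L[ℝ] E →L[ℝ] F} (hB : ∀ v w, B v w = B w v) (c y : E) :
    HasFDerivAt (fun z => B (z - c) (z - c)) ((2 : ℝ) • B (y - c)) y := by
  have hsub : HasFDerivAt (fun z : E => z - c) (ContinuousLinearMap.id ℝ E) y :=
    (hasFDerivAt_id y).sub_const c
  refine ((B.hasFDerivAt.comp y hsub).clm_apply hsub).congr_fderiv ?_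
  ext v
  simp [two_smul, hB v]

theorem ContDiffAt.isLittleO_sub_taylor_two {f : E → F} (hf : ContDiffAt ℝ 2 f x) :
    (fun y => f y - f x - fderiv ℝ f x (y - x)
        - (1 / 2 : ℝ) • fderiv ℝ (fderiv ℝ f) x (y - x) (y - x))
      =o[𝓝 x] fun y => ‖y - x‖ ^ 2 := by
  set f'' := fderiv ℝ (fderiv ℝ f) x
  have hf1 : ∀ᶠ y in 𝓝 x, HasFDerivAt f (fderiv ℝ f y) y :=
    (hf.eventually (by simp)).mono fun y hy => (hy.differentiableAt (by simp)).hasFDerivAt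
  have hf2 : HasFDerivAt (fderiv ℝ f) f'' x :=
    ((hf.fderiv_right (m := 1) le_rfl).differentiableAt one_ne_zero).hasFDerivAt
  have hsymm : ∀ v w, f'' v w = f'' w v := second_derivative_symmetric_of_eventually hf1 hf2
  have key := isLittleO_sub_sq_of_hasFDerivAt_isLittleO
    (f := fun y => f y - f x - fderiv ℝ f x (y - x) - (1 / 2 : ℝ) • f'' (y - x) (y - x))
    (f' := fun y => fderiv ℝ f y - fderiv ℝ f x - f'' (y - x)) ?_ hf2.isLittleO
  · simpa using key
  filter_upwards [hf1] with y hy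
  refine (((hy.sub_const (f x)).sub ((fderiv ℝ f x).hasFDerivAt.comp y
    ((hasFDerivAt_id y).sub_const x))).sub
    ((hasFDerivAt_bilinear_diag hsymm x y).const_smul (1 / 2 : ℝ))).congr_fderiv ?_
  rw [ContinuousLinearMap.comp_id, smul_smul]
  norm_num

end Taylor

section Homothety

variable {E F : Type*} [NormedAddCommGroup E] [NormedSpace ℝ E] [NormedAddCommGroup F]
  [NormedSpace ℝ F] {x : E}

theorem homothety_sub_center (α : ℝ) (x θ : E) :
    α • x + (1 - α) • θ - x = (1 - α) • (θ - x) := by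
  module

theorem tendsto_homothety_nhds (α : ℝ) (x : E) :
    Tendsto (fun θ => α • x + (1 - α) • θ) (𝓝 x) (𝓝 x) := by
  have : Continuous fun θ : E => α • x + (1 - α) • θ := by fun_prop
  simpa [← add_smul] using this.tendsto x

theorem isBigO_homothety_sub_center (α : ℝ) (x : E) :
    (fun θ => α • x + (1 - α) • θ - x) =O[𝓝 x] fun θ => θ - x := by
  simp only [homothety_sub_center]
  exact (isBigO_refl _ _).const_smul_left _

theorem HasFDerivAt.isLittleO_sub_comp_homothety {f : E → F} {f' : E →L[ℝ] F}
    (hf : HasFDerivAt f f' x) (α : ℝ) :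
    (fun θ => f θ - f (α • x + (1 - α) • θ) - α • f' (θ - x)) =o[𝓝 x] fun θ => θ - x := by
  have hφ := (hf.isLittleO.comp_tendsto (tendsto_homothety_nhds α x)).trans_isBigO
    (isBigO_homothety_sub_center α x)
  refine (hf.isLittleO.sub hφ).congr_left fun θ => ?_
  simp only [Function.comp_apply, homothety_sub_center, map_smul]
  module

theorem ContDiffAt.isLittleO_jensenGap_sub_quadratic {A : E → ℝ} (hA : ContDiffAt ℝ 2 A x)
    {α : ℝ} (hα : α ≠ 1) :
    (fun θ => (1 / (1 - α)) * (α * A x + (1 - α) * A θ - A (α • x + (1 - α) • θ))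
        - (α / 2) * fderiv ℝ (fderiv ℝ A) x (θ - x) (θ - x))
      =o[𝓝 x] fun θ => ‖θ - x‖ ^ 2 := by
  have hα' : 1 - α ≠ 0 := sub_ne_zero.2 hα.symm
  have hT := hA.isLittleO_sub_taylor_two
  have hTφ := (hT.comp_tendsto (tendsto_homothety_nhds α x)).trans_isBigO
    ((isBigO_homothety_sub_center α x).norm_norm.pow 2)
  refine (hT.sub (hTφ.const_mul_left (1 / (1 - α)))).congr_left fun θ => ?_
  simp only [Function.comp_apply, homothety_sub_center, map_smul, smul_eq_mul, smul_apply]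
  field_simp
  ring

end Homothety

theorem HasGradientAt.hasFDerivAt_of_fderiv {E : Type*} [NormedAddCommGroup E]
    [InnerProductSpace ℝ E] [CompleteSpace E] {f : E → ℝ} {gradf : E → E} {x : E}
    (hf : ∀ᶠ y in 𝓝 x, HasGradientAt f (gradf y) y)
    (hf' : DifferentiableAt ℝ (fderiv ℝ f) x) {Hess : E →L[ℝ] E}
    (hHess : ∀ v w, ⟪Hess v, w⟫ = fderiv ℝ (fderiv ℝ f) x v w) :
    HasFDerivAt gradf Hess x := by
  rw [← (InnerProductSpace.toDual ℝ E).comp_hasFDerivAt_iff]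
  refine hf'.hasFDerivAt.congr_of_eventuallyEq ?_ |>.congr_fderiv ?_
  · filter_upwards [hf] with y hy using hy.hasFDerivAt.fderiv.symm
  · ext v w
    exact (hHess v w).symm

section QuadraticForm

variable {E : Type*} [NormedAddCommGroup E] [InnerProductSpace ℝ E]

theorem abs_inner_map_add_sub_le (J : E →L[ℝ] E) (u r : E) :
    |⟪J (u + r), u + r⟫ - ⟪J u, u⟫| ≤ ‖J‖ * (2 * ‖u‖ + ‖r‖) * ‖r‖ := by
  have hsplit : ⟪J (u + r), u + r⟫ - ⟪J u, u⟫ = ⟪J u, r⟫ + ⟪J r, u + r⟫ := by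
    simp only [map_add, inner_add_left, inner_add_right]; ring
  have h1 : |⟪J u, r⟫| ≤ ‖J‖ * ‖u‖ * ‖r‖ :=
    (abs_real_inner_le_norm _ _).trans (by gcongr; exact J.le_opNorm u)
  have h2 : |⟪J r, u + r⟫| ≤ ‖J‖ * ‖r‖ * (‖u‖ + ‖r‖) :=
    (abs_real_inner_le_norm _ _).trans (by gcongr; exacts [J.le_opNorm r, norm_add_le u r])
  rw [hsplit]
  calc _ ≤ |⟪J u, r⟫| + |⟪J r, u + r⟫| := abs_add_le _ _
    _ ≤ _ := by linarith

theorem isLittleO_inner_map_add_sub {ι : Type*} {l : Filter ι} (J : E →L[ℝ] E) {u r : ι → E}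
    {k : ι → ℝ} (hu : u =O[l] k) (hr : r =o[l] k) :
    (fun t => ⟪J (u t + r t), u t + r t⟫ - ⟪J (u t), u t⟫) =o[l] fun t => k t ^ 2 := by
  have hfac : (fun t => ‖J‖ * (2 * ‖u t‖ + ‖r t‖)) =O[l] k :=
    ((hu.norm_left.const_mul_left 2).add hr.isBigO.norm_left).const_mul_left ‖J‖
  refine IsBigO.trans_isLittleO (IsBigO.of_bound 1 ?_)
    ((hfac.mul_isLittleO hr.norm_left).congr_right fun t => (sq (k t)).symm)
  filter_upwards with t
  rw [one_mul, Real.norm_eq_abs, Real.norm_of_nonneg (by positivity)]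
  exact abs_inner_map_add_sub_le J (u t) (r t)

end QuadraticForm

theorem statement11_general
    {H : Type*} [NormedAddCommGroup H] [InnerProductSpace ℝ H] [FiniteDimensional ℝ H]
    (U : Set H) (hUo : IsOpen U)
    (A : H → ℝ) (hA : ContDiffOn ℝ 2 A U)
    (θπ : H) (hθπ : θπ ∈ U)
    (α : ℝ) (hα : 0 < α) (hα1 : α ≠ 1)
    (g : H → ℝ)
    (hg : ∀ θ, g θ = (1/(1-α)) * (α * A θπ + (1-α) * A θ - A (α • θπ + (1-α) • θ)))
    (gA : H → H) (hgA : ∀ θ ∈ U, HasGradientAt A (gA θ) θ)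
    (Hess J : H →L[ℝ] H)
    (hHess : ∀ v w : H, ⟪Hess v, w⟫ = iteratedFDerivWithin ℝ 2 A U θπ ![v, w])
    (hJ1 : ∀ v, J (Hess v) = v)
    (G : H → H) (hG : ∀ θ, G θ = gA θ - gA (α • θπ + (1-α) • θ)) :
    ((fun θ => g θ - (1/(2*α)) * ⟪J (G θ), G θ⟫)
        =o[𝓝 θπ] (fun θ => ‖θ - θπ‖ ^ 2)) ∧
    ∃ e : H → ℝ, (e =o[𝓝 θπ] fun θ => ‖θ - θπ‖ ^ 2) ∧
      ∀ᶠ θ in 𝓝 θπ, g θ ≤ (1/(2*α)) * ⟪J (G θ), G θ⟫ + e θ := by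
  have hAc : ContDiffAt ℝ 2 A θπ := hA.contDiffAt (hUo.mem_nhds hθπ)
  have hHess' : ∀ v w, ⟪Hess v, w⟫ = fderiv ℝ (fderiv ℝ A) θπ v w := fun v w => by
    rw [hHess, iteratedFDerivWithin_of_isOpen 2 hUo hθπ, iteratedFDeriv_two_apply]; rfl
  have hgrad : HasFDerivAt gA Hess θπ :=
    HasGradientAt.hasFDerivAt_of_fderiv (eventually_of_mem (hUo.mem_nhds hθπ) hgA)
      ((hAc.fderiv_right (m := 1) le_rfl).differentiableAt one_ne_zero) hHess'
  set u : H → H := fun θ => α • Hess (θ - θπ)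
  have hu : u =O[𝓝 θπ] fun θ => ‖θ - θπ‖ :=
    ((Hess.isBigO_comp _ _).const_smul_left α).norm_right
  have hr : (fun θ => G θ - u θ) =o[𝓝 θπ] fun θ => ‖θ - θπ‖ := by
    simpa only [hG] using (hgrad.isLittleO_sub_comp_homothety α).norm_right
  have hgap := hAc.isLittleO_jensenGap_sub_quadratic hα1
  have hmain : (fun θ => g θ - (1/(2*α)) * ⟪J (G θ), G θ⟫) =o[𝓝 θπ] fun θ => ‖θ - θπ‖ ^ 2 := by
    have hquad := (isLittleO_inner_map_add_sub J hu hr).const_mul_left (1 / (2 * α))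
    refine (hgap.sub hquad).congr_left fun θ => ?_
    simp only [u, add_sub_cancel, map_smul, hJ1, ← hHess', hg, real_inner_smul_left,
      real_inner_smul_right, real_inner_comm (θ - θπ)]
    field_simp
    ring
  exact ⟨hmain, _, hmain, .of_forall fun θ => by linarith⟩

/-- Polyak–Łojasiewicz-type expansion around `θπ`: with `J` the inverse of the Hessian
`∇²A(θπ)` and `G θ = ∇A θ - ∇A (α θπ + (1-α) θ)` the gradient of
`g θ = (1/(1-α)) (α A θπ + (1-α) A θ - A (α θπ + (1-α) θ))`, one has
`g θ - (1/(2α)) ⟪J (G θ), G θ⟫ = o(‖θ - θπ‖²)` as `θ → θπ`; in particular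
`g θ ≤ (1/(2α)) ⟪J (G θ), G θ⟫ + o(‖θ - θπ‖²)` around `θπ`. -/
theorem statement11
    {H : Type*} [NormedAddCommGroup H] [InnerProductSpace ℝ H] [FiniteDimensional ℝ H]
    (U : Set H) (hUo : IsOpen U)
    (A : H → ℝ) (hA : ContDiffOn ℝ 2 A U)
    (θπ : H) (hθπ : θπ ∈ U)
    (α : ℝ) (hα : 0 < α) (hα1 : α ≠ 1)
    (g : H → ℝ)
    (hg : ∀ θ, g θ = (1/(1-α)) * (α * A θπ + (1-α) * A θ - A (α • θπ + (1-α) • θ)))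
    (gA : H → H) (hgA : ∀ θ ∈ U, HasGradientAt A (gA θ) θ)
    (Hess J : H →L[ℝ] H)
    (hHess : ∀ v w : H, ⟪Hess v, w⟫ = iteratedFDerivWithin ℝ 2 A U θπ ![v, w])
    (hJ1 : ∀ v, J (Hess v) = v) (hJ2 : ∀ v, Hess (J v) = v)
    (G : H → H) (hG : ∀ θ, G θ = gA θ - gA (α • θπ + (1-α) • θ)) :
    ((fun θ => g θ - (1/(2*α)) * ⟪J (G θ), G θ⟫)
        =o[𝓝 θπ] (fun θ => ‖θ - θπ‖ ^ 2)) ∧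
    ∃ e : H → ℝ, (e =o[𝓝 θπ] fun θ => ‖θ - θπ‖ ^ 2) ∧
      ∀ᶠ θ in 𝓝 θπ, g θ ≤ (1/(2*α)) * ⟪J (G θ), G θ⟫ + e θ :=
  statement11_general U hUo A hA θπ hθπ α hα hα1 g hg gA hgA Hess J hHess hJ1 G hG
end

section
/- Fix θπ < 0 and define f : (−∞, 0) → ℝ by f(θ) = ∫_ℝ N_{θπ}(x) · log(N_{θπ}(x)/N_θ(x)) dx (the Kullback–Leibler divergence KL(q_{θπ}, q_θ) for the family of centered one-dimensional Gaussians). Then f is differentiable at every θ < 0, and there is no L ≥ 0 such that the derivative of f is L-Lipschitz on (−∞, 0). (This witnesses that there exist a target and an exponential family for which the gradient of the divergence objective is not Lipschitz on its domain.) -/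
/-!
`N_θ` is the density of `gaussianReal 0 (-1 / (2θ))`, and `log (N_θπ / N_θ)` is affine in `x²`,
so the divergence has the closed form `f θ = (θ - θπ) / (2θπ) + A θ - A θπ`. Hence
`f' θ = 1 / (2θπ) - 1 / (2θ)`, which inherits from `θ ↦ θ⁻¹` its failure to be Lipschitz near `0`.
-/

open MeasureTheory Real ProbabilityTheory
open scoped NNReal

noncomputable section

def gaussianLogPartition (θ : ℝ) : ℝ := 1 / 2 * log π - 1 / 2 * log (-θ)

def gaussianDensity (θ x : ℝ) : ℝ := exp (θ * x ^ 2 - gaussianLogPartition θ)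

def gaussianVariance (θ : ℝ) : ℝ≥0 := (-(2 * θ)⁻¹).toNNReal

lemma coe_gaussianVariance {θ : ℝ} (hθ : θ < 0) : (gaussianVariance θ : ℝ) = -(2 * θ)⁻¹ :=
  Real.coe_toNNReal _ (by simp only [neg_nonneg, inv_nonpos]; linarith)

lemma gaussianDensity_eq_gaussianPDFReal {θ : ℝ} (hθ : θ < 0) :
    gaussianDensity θ = gaussianPDFReal 0 (gaussianVariance θ) := by
  ext x
  have hπθ : 0 < π / -θ := div_pos pi_pos (by linarith)
  have hnorm : exp (-gaussianLogPartition θ) = (√(2 * π * gaussianVariance θ))⁻¹ := by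
    rw [coe_gaussianVariance hθ, show 2 * π * -(2 * θ)⁻¹ = π / -θ by field_simp,
      ← exp_log (sqrt_pos.mpr hπθ), ← exp_neg, log_sqrt hπθ.le, log_div pi_ne_zero (by linarith),
      gaussianLogPartition]
    ring_nf
  rw [gaussianPDFReal, gaussianDensity, sub_eq_add_neg, exp_add, hnorm, coe_gaussianVariance hθ]
  field_simp
  ring_nf

lemma integral_sq_gaussianReal_zero (v : ℝ≥0) : ∫ x, x ^ 2 ∂gaussianReal 0 v = v := by
  simpa [variance_eq_integral measurable_id'.aemeasurable, integral_id_gaussianReal]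
    using variance_fun_id_gaussianReal (μ := 0) (v := v)

lemma integral_gaussianDensity_mul {θ : ℝ} (hθ : θ < 0) (g : ℝ → ℝ) :
    ∫ x, gaussianDensity θ x * g x = ∫ x, g x ∂gaussianReal 0 (gaussianVariance θ) := by
  have hv : gaussianVariance θ ≠ 0 := by
    rw [← NNReal.coe_ne_zero, coe_gaussianVariance hθ]
    exact (neg_pos.mpr (inv_lt_zero.mpr (by linarith))).ne'
  rw [integral_gaussianReal_eq_integral_smul hv, gaussianDensity_eq_gaussianPDFReal hθ]
  rfl

lemma log_gaussianDensity_div (θ₀ θ x : ℝ) :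
    log (gaussianDensity θ₀ x / gaussianDensity θ x)
      = (θ₀ - θ) * x ^ 2 + (gaussianLogPartition θ - gaussianLogPartition θ₀) := by
  rw [gaussianDensity, gaussianDensity, ← exp_sub, log_exp]
  ring

lemma integral_gaussianDensity_mul_log_div {θ₀ : ℝ} (hθ₀ : θ₀ < 0) (θ : ℝ) :
    ∫ x, gaussianDensity θ₀ x * log (gaussianDensity θ₀ x / gaussianDensity θ x)
      = (θ - θ₀) / (2 * θ₀) + (gaussianLogPartition θ - gaussianLogPartition θ₀) := by
  have hsq : Integrable (fun x : ℝ ↦ x ^ 2) (gaussianReal 0 (gaussianVariance θ₀)) :=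
    (memLp_id_gaussianReal 2).integrable_sq
  simp_rw [integral_gaussianDensity_mul hθ₀, log_gaussianDensity_div]
  rw [integral_add (hsq.const_mul _) (integrable_const _), integral_const_mul,
    integral_sq_gaussianReal_zero, coe_gaussianVariance hθ₀, integral_const, probReal_univ,
    one_smul]
  field_simp
  ring

lemma hasDerivAt_gaussianLogPartition {θ : ℝ} (hθ : θ < 0) :
    HasDerivAt gaussianLogPartition (-(2 * θ)⁻¹) θ := by
  have hlog := ((hasDerivAt_neg θ).log (by linarith)).const_mul (1 / 2)
  refine (hlog.const_sub (1 / 2 * log π)).congr_deriv ?_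
  field_simp

lemma not_exists_lipschitz_inv_Iio :
    ¬ ∃ L : ℝ, ∀ θ θ' : ℝ, θ < 0 → θ' < 0 → |θ⁻¹ - θ'⁻¹| ≤ L * |θ - θ'| := by
  rintro ⟨L, hL⟩
  set t : ℝ := (2 * (|L| + 1))⁻¹ with ht
  have htpos : 0 < t := by positivity
  have h := hL (-t) (-(2 * t)) (by linarith) (by linarith)
  rw [show (-t)⁻¹ - (-(2 * t))⁻¹ = -(2 * t)⁻¹ by field_simp; ring,
    show -t - -(2 * t) = t by ring, abs_neg, abs_of_pos (by positivity), abs_of_pos htpos] at h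
  have hlhs : (2 * t)⁻¹ = |L| + 1 := by rw [ht]; field_simp
  have ht_le : t ≤ 1 := by rw [ht]; apply inv_le_one_of_one_le₀; linarith [abs_nonneg L]
  nlinarith [le_abs_self L, abs_nonneg L]

end

/-- For the family of centered one-dimensional Gaussians with natural parameter `θ < 0`
and target `N_θπ`, the KL objective `f θ = ∫ N_θπ log (N_θπ / N_θ)` is differentiable at
every `θ < 0`, but its derivative is not Lipschitz on `(-∞, 0)`: there is no `L ≥ 0`
such that the derivative of `f` is `L`-Lipschitz on `(-∞, 0)`. -/
theorem statement12
    (θπ : ℝ) (hθπ : θπ < 0)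
    (A : ℝ → ℝ) (hA : ∀ θ, A θ = (1/2) * log π - (1/2) * log (-θ))
    (N : ℝ → ℝ → ℝ) (hN : ∀ θ x, N θ x = exp (θ * x ^ 2 - A θ))
    (f : ℝ → ℝ) (hf : ∀ θ, f θ = ∫ x : ℝ, N θπ x * log (N θπ x / N θ x)) :
    (∀ θ : ℝ, θ < 0 → DifferentiableAt ℝ f θ) ∧
    ¬ ∃ L : ℝ, 0 ≤ L ∧ ∀ θ θ' : ℝ, θ < 0 → θ' < 0 →
        |deriv f θ - deriv f θ'| ≤ L * |θ - θ'| := by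
  obtain rfl : A = gaussianLogPartition := funext hA
  obtain rfl : N = gaussianDensity := funext fun θ ↦ funext (hN θ)
  have hf_eq : f = fun θ ↦
      (θ - θπ) / (2 * θπ) + (gaussianLogPartition θ - gaussianLogPartition θπ) :=
    funext fun θ ↦ (hf θ).trans (integral_gaussianDensity_mul_log_div hθπ θ)
  have hderiv (θ : ℝ) (hθ : θ < 0) : HasDerivAt f ((2 * θπ)⁻¹ - (2 * θ)⁻¹) θ := by
    rw [hf_eq]
    refine ((((hasDerivAt_id θ).sub_const θπ).div_const (2 * θπ)).add
      ((hasDerivAt_gaussianLogPartition hθ).sub_const _)).congr_deriv ?_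
    ring
  refine ⟨fun θ hθ ↦ (hderiv θ hθ).differentiableAt, ?_⟩
  rintro ⟨L, -, hL⟩
  refine not_exists_lipschitz_inv_Iio ⟨2 * L, fun θ θ' hθ hθ' ↦ ?_⟩
  have h := hL θ θ' hθ hθ'
  rw [(hderiv θ hθ).deriv, (hderiv θ' hθ').deriv] at h
  calc |θ⁻¹ - θ'⁻¹| = 2 * |(2 * θπ)⁻¹ - (2 * θ)⁻¹ - ((2 * θπ)⁻¹ - (2 * θ')⁻¹)| := by
        rw [abs_sub_comm, ← abs_two, ← abs_mul, abs_two]; congr 1; ring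
    _ ≤ 2 * L * |θ - θ'| := by linarith
end

section
/- (Three-point sufficient decrease under relative strong convexity.) Let f : H → ℝ be differentiable on U with both A − f and f − A convex on U, and let r : H → ℝ be convex. Let τ ∈ (0,1], θ ∈ U, and let θ⁺ ∈ U be a minimizer over U of the function θ' ↦ r(θ') + ⟨∇f(θ), θ' − θ⟩ + (1/τ) d_A(θ', θ). Then for every θ' ∈ U: τ · [(f(θ⁺) + r(θ⁺)) − (f(θ') + r(θ'))] ≤ (1 − τ) · d_A(θ', θ) − (1 − τ) · d_A(θ⁺, θ) − d_A(θ', θ⁺). -/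
/-!
Relative smoothness (`A - f` convex) bounds `f θ⁺` above by the model
`f θ + ⟪∇f θ, θ⁺ - θ⟫ + d_A(θ⁺, θ)`, and relative strong convexity (`f - A` convex) bounds
`f θ'` below by the same model at `θ'`. The first-order optimality condition of the proximal
step, read through the three-point identity
`d_A(θ', θ) - d_A(θ⁺, θ) - d_A(θ', θ⁺) = ⟪∇A θ⁺ - ∇A θ, θ' - θ⁺⟫`, bounds `r θ⁺ - r θ'`.
Adding `τ` times the two model bounds to `τ` times the optimality bound, the linear terms
cancel and what remains is the claim.
-/

open scoped RealInnerProductSpace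

open InnerProductSpace

section FirstOrder

variable {E : Type*} [NormedAddCommGroup E] [NormedSpace ℝ E]

theorem ConvexOn.sub_le_fderiv_of_isMinOn_add {s : Set E} {r φ : E → ℝ} {φ' : E →L[ℝ] ℝ}
    {x y : E} (hr : ConvexOn ℝ s r) (hφ : HasFDerivAt φ φ' x)
    (hmin : IsMinOn (fun z => r z + φ z) s x) (hx : x ∈ s) (hy : y ∈ s) :
    r x - r y ≤ φ' (y - x) := by
  -- On the segment from `x` to `y`, convexity of `r` turns minimality of `r + φ` into
  -- minimality of `ψ` at the endpoint `0`, and Fermat's rule there gives `0 ≤ ψ' 0`.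
  set ψ : ℝ → ℝ := fun t => φ (x + t • (y - x)) - t * (r x - r y)
  have hψ_min : IsMinOn ψ (Set.Icc 0 1) 0 := by
    refine isMinOn_iff.2 fun t ⟨ht0, ht1⟩ => ?_
    have hseg : x + t • (y - x) = (1 - t) • x + t • y := by module
    have hr_seg : r (x + t • (y - x)) ≤ (1 - t) * r x + t * r y := by
      simpa only [hseg, smul_eq_mul] using hr.2 hx hy (sub_nonneg.2 ht1) ht0 (by ring)
    have hmin_seg := isMinOn_iff.1 hmin _ (hseg ▸ hr.1 hx hy (sub_nonneg.2 ht1) ht0 (by ring))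
    simp only [ψ, zero_smul, add_zero, zero_mul, sub_zero] at hmin_seg ⊢
    linarith
  have hψ_deriv : HasDerivAt ψ (φ' (y - x) - (r x - r y)) 0 := by
    have hline : HasDerivAt (fun t : ℝ => x + t • (y - x)) (y - x) 0 := by
      simpa using ((hasDerivAt_id (0 : ℝ)).smul_const (y - x)).const_add x
    exact (hφ.comp_hasDerivAt_of_eq 0 hline (by simp)).sub
      ((hasDerivAt_id 0).mul_const (r x - r y) |>.congr_deriv (one_mul _))
  have hone : (1 : ℝ) ∈ posTangentConeAt (Set.Icc 0 1) 0 :=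
    mem_posTangentConeAt_of_segment_subset (by simp [segment_eq_Icc])
  simpa using
    hψ_min.localize.hasFDerivWithinAt_nonneg hψ_deriv.hasFDerivAt.hasFDerivWithinAt hone

theorem ConvexOn.fderiv_sub_le {s : Set E} {φ : E → ℝ} {φ' : E →L[ℝ] ℝ} {x y : E}
    (hφ : ConvexOn ℝ s φ) (hφ' : HasFDerivAt φ φ' x) (hx : x ∈ s) (hy : y ∈ s) :
    φ' (y - x) ≤ φ y - φ x := by
  -- `x` minimizes `φ + (-φ) = 0`, with `φ` in the role of the convex part.
  have := hφ.sub_le_fderiv_of_isMinOn_add hφ'.neg (isMinOn_iff.2 fun z _ => by simp) hx hy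
  rw [neg_apply] at this
  linarith

end FirstOrder

section Bregman

variable {H : Type*} [NormedAddCommGroup H] [InnerProductSpace ℝ H]

def bregman (A : H → ℝ) (gA : H → H) (x y : H) : ℝ := A x - A y - ⟪gA y, x - y⟫

theorem bregman_three_point (A : H → ℝ) (gA : H → H) (x y z : H) :
    bregman A gA z x - bregman A gA y x - bregman A gA z y = ⟪gA y - gA x, z - y⟫ := by
  simp only [bregman, inner_sub_left, inner_sub_right]
  ring

variable [CompleteSpace H]

theorem le_add_inner_add_bregman_of_convexOn_sub {s : Set H} {A f : H → ℝ} {gA : H → H}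
    {g x y : H} (hconv : ConvexOn ℝ s (fun z => A z - f z)) (hA : HasGradientAt A (gA x) x)
    (hf : HasGradientAt f g x) (hx : x ∈ s) (hy : y ∈ s) :
    f y ≤ f x + ⟪g, y - x⟫ + bregman A gA y x := by
  have := hconv.fderiv_sub_le
    ((hasGradientAt_iff_hasFDerivAt.1 hA).sub (hasGradientAt_iff_hasFDerivAt.1 hf)) hx hy
  rw [sub_apply, toDual_apply_apply, toDual_apply_apply] at this
  rw [bregman]
  linarith

theorem add_inner_add_bregman_le_of_convexOn_sub {s : Set H} {A f : H → ℝ} {gA : H → H}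
    {g x y : H} (hconv : ConvexOn ℝ s (fun z => f z - A z)) (hA : HasGradientAt A (gA x) x)
    (hf : HasGradientAt f g x) (hx : x ∈ s) (hy : y ∈ s) :
    f x + ⟪g, y - x⟫ + bregman A gA y x ≤ f y := by
  have := hconv.fderiv_sub_le
    ((hasGradientAt_iff_hasFDerivAt.1 hf).sub (hasGradientAt_iff_hasFDerivAt.1 hA)) hx hy
  rw [sub_apply, toDual_apply_apply, toDual_apply_apply] at this
  rw [bregman]
  linarith

theorem hasFDerivAt_inner_sub_const (g x y : H) :
    HasFDerivAt (fun w => ⟪g, w - x⟫) (toDual ℝ H g) y :=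
  (toDual ℝ H g : H →L[ℝ] ℝ).hasFDerivAt.comp y ((hasFDerivAt_id y).sub_const x)

theorem ConvexOn.sub_le_inner_add_bregman_of_isMinOn {s : Set H} {r A : H → ℝ} {gA : H → H}
    {g x xp z : H} {c : ℝ} (hr : ConvexOn ℝ s r) (hA : HasGradientAt A (gA xp) xp)
    (hmin : IsMinOn (fun w => r w + ⟪g, w - x⟫ + c * bregman A gA w x) s xp)
    (hxp : xp ∈ s) (hz : z ∈ s) :
    r xp - r z ≤
      ⟪g, z - xp⟫ + c * (bregman A gA z x - bregman A gA xp x - bregman A gA z xp) := by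
  have hφ : HasFDerivAt (fun w => ⟪g, w - x⟫ + c * bregman A gA w x)
      (toDual ℝ H g + c • (toDual ℝ H (gA xp) - toDual ℝ H (gA x))) xp :=
    (hasFDerivAt_inner_sub_const g x xp).add
      ((((hasGradientAt_iff_hasFDerivAt.1 hA).sub_const (A x)).sub
        (hasFDerivAt_inner_sub_const (gA x) x xp)).const_mul c)
  have := hr.sub_le_fderiv_of_isMinOn_add hφ (by simpa only [add_assoc] using hmin) hxp hz
  rw [bregman_three_point, inner_sub_left]
  simpa only [add_apply, smul_apply, sub_apply, toDual_apply_apply, smul_eq_mul] using this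

end Bregman

theorem statement15_general
    {H : Type*} [NormedAddCommGroup H] [InnerProductSpace ℝ H] [FiniteDimensional ℝ H]
    (U : Set H) (hUc : Convex ℝ U)
    (A : H → ℝ)
    (gA : H → H) (hgA : ∀ θ ∈ U, HasGradientAt A (gA θ) θ)
    (dA : H → H → ℝ) (hdA : ∀ θ θ', dA θ θ' = A θ - A θ' - ⟪gA θ', θ - θ'⟫)
    (f : H → ℝ) (gf : H → H) (hgf : ∀ θ ∈ U, HasGradientAt f (gf θ) θ)
    (hrel : ConvexOn ℝ U (fun θ => A θ - f θ))
    (hrel' : ConvexOn ℝ U (fun θ => f θ - A θ))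
    (r : H → ℝ) (hr : ConvexOn ℝ Set.univ r)
    (τ : ℝ) (hτ : τ ∈ Set.Ioc (0:ℝ) 1)
    (θ θp : H) (hθ : θ ∈ U) (hθp : θp ∈ U)
    (hmin : ∀ θ' ∈ U,
      r θp + ⟪gf θ, θp - θ⟫ + (1/τ) * dA θp θ ≤
      r θ' + ⟪gf θ, θ' - θ⟫ + (1/τ) * dA θ' θ) :
    ∀ θ' ∈ U,
      τ * ((f θp + r θp) - (f θ' + r θ')) ≤
        (1 - τ) * dA θ' θ - (1 - τ) * dA θp θ - dA θ' θp := by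
  intro θ' hθ'
  obtain rfl : dA = bregman A gA := funext₂ hdA
  have hsmooth := le_add_inner_add_bregman_of_convexOn_sub hrel (hgA θ hθ) (hgf θ hθ) hθ hθp
  have hconvex := add_inner_add_bregman_le_of_convexOn_sub hrel' (hgA θ hθ) (hgf θ hθ) hθ hθ'
  have hprox := (hr.subset (Set.subset_univ U) hUc).sub_le_inner_add_bregman_of_isMinOn
    (hgA θp hθp) (isMinOn_iff.2 hmin) hθp hθ'
  have hinner : ⟪gf θ, θp - θ⟫ - ⟪gf θ, θ' - θ⟫ + ⟪gf θ, θ' - θp⟫ = 0 := by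
    simp only [inner_sub_right]
    ring
  have hτprox := mul_le_mul_of_nonneg_left hprox hτ.1.le
  rw [mul_add, ← mul_assoc, mul_one_div_cancel hτ.1.ne', one_mul] at hτprox
  have hτf := mul_le_mul_of_nonneg_left (add_le_add hsmooth hconvex) hτ.1.le
  linear_combination hτf + hτprox + τ * hinner

/-- Three-point sufficient decrease under 1-relative smoothness and 1-relative strong
convexity (`A - f` and `f - A` both convex on `U`): for a Bregman proximal-gradient step
with `τ ∈ (0,1]` from `θ` to `θ⁺`, for every `θ' ∈ U`,
`τ (F(θ⁺) - F(θ')) ≤ (1-τ) d_A(θ', θ) - (1-τ) d_A(θ⁺, θ) - d_A(θ', θ⁺)`, `F = f + r`. -/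
theorem statement15
    {H : Type*} [NormedAddCommGroup H] [InnerProductSpace ℝ H] [FiniteDimensional ℝ H]
    (U : Set H) (hUo : IsOpen U) (hUc : Convex ℝ U)
    (A : H → ℝ) (hAconv : ConvexOn ℝ U A)
    (gA : H → H) (hgA : ∀ θ ∈ U, HasGradientAt A (gA θ) θ)
    (dA : H → H → ℝ) (hdA : ∀ θ θ', dA θ θ' = A θ - A θ' - ⟪gA θ', θ - θ'⟫)
    (f : H → ℝ) (gf : H → H) (hgf : ∀ θ ∈ U, HasGradientAt f (gf θ) θ)
    (hrel : ConvexOn ℝ U (fun θ => A θ - f θ))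
    (hrel' : ConvexOn ℝ U (fun θ => f θ - A θ))
    (r : H → ℝ) (hr : ConvexOn ℝ Set.univ r)
    (τ : ℝ) (hτ : τ ∈ Set.Ioc (0:ℝ) 1)
    (θ θp : H) (hθ : θ ∈ U) (hθp : θp ∈ U)
    (hmin : ∀ θ' ∈ U,
      r θp + ⟪gf θ, θp - θ⟫ + (1/τ) * dA θp θ ≤
      r θ' + ⟪gf θ, θ' - θ⟫ + (1/τ) * dA θ' θ) :
    ∀ θ' ∈ U,
      τ * ((f θp + r θp) - (f θ' + r θ')) ≤
        (1 - τ) * dA θ' θ - (1 - τ) * dA θp θ - dA θ' θp :=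
  statement15_general U hUc A gA hgA dA hdA f gf hgf hrel hrel' r hr τ hτ θ θp hθ hθp hmin
end

section
/- (Sequential consistency of the Bregman divergence.) Assume in addition that A is strictly convex on U, and let C ⊆ U be compact. If (θ_k) and (θ'_k) are sequences with θ_k ∈ C and θ'_k ∈ C for every k, and d_A(θ_k, θ'_k) → 0 as k → ∞, then ‖θ_k − θ'_k‖ → 0 as k → ∞. -/
open Filter
open scoped RealInnerProductSpace Topology

-- gradient inequality with midpoint
lemma grad_midpoint_ineq
    {H : Type*} [NormedAddCommGroup H] [InnerProductSpace ℝ H] [CompleteSpace H]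
    (U : Set H) (hUc : Convex ℝ U)
    (A : H → ℝ) (hAconv : ConvexOn ℝ U A)
    (gA : H → H) (hgA : ∀ θ ∈ U, HasGradientAt A (gA θ) θ)
    {x y : H} (hx : x ∈ U) (hy : y ∈ U) :
    ⟪gA x, y - x⟫ ≤ 2 * (A ((1/2 : ℝ) • (x + y)) - A x) := by
  set φ : ℝ →ᵃ[ℝ] H := AffineMap.lineMap x y with hφ
  have hφ0 : φ 0 = x := by simp [hφ]
  have hφh : φ (1/2) = (1/2 : ℝ) • (x + y) := by
    simp [hφ, AffineMap.lineMap_apply, smul_sub, smul_add]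
    module
  have hconv : ConvexOn ℝ (φ ⁻¹' U) (A ∘ φ) := hAconv.comp_affineMap φ
  have hder : HasDerivAt (A ∘ φ) ⟪gA x, y - x⟫ 0 := by
    have h1 : HasDerivAt φ (y - x) 0 := by
      have := φ.hasDerivAt (x := (0:ℝ))
      simpa [hφ] using this
    have h2 := (hgA x hx).hasFDerivAt
    rw [← hφ0] at h2
    have := h2.comp_hasDerivAt 0 h1
    simpa [hφ0] using this
  have h0 : (0:ℝ) ∈ φ ⁻¹' U := by simp [Set.mem_preimage, hφ0, hx]
  have hh : (1/2:ℝ) ∈ φ ⁻¹' U := by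
    simp only [Set.mem_preimage, hφh]
    have := hUc hx hy (by norm_num : (0:ℝ) ≤ 1/2) (by norm_num : (0:ℝ) ≤ 1/2) (by norm_num)
    convert this using 1
    module
  have := hconv.le_slope_of_hasDerivAt h0 hh (by norm_num) hder
  rw [slope_def_field] at this
  simp only [Function.comp_apply, hφ0, hφh] at this
  calc ⟪gA x, y - x⟫ ≤ (A ((1/2:ℝ) • (x + y)) - A x) / (1/2 - 0) := this
    _ = 2 * (A ((1/2 : ℝ) • (x + y)) - A x) := by ring

/-- Sequential consistency of the Bregman divergence: if `A` is strictly convex on `U`,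
`C ⊆ U` is compact, and two sequences in `C` satisfy `d_A(θ_k, θ'_k) → 0`, then
`‖θ_k - θ'_k‖ → 0`. -/
theorem statement16
    {H : Type*} [NormedAddCommGroup H] [InnerProductSpace ℝ H] [FiniteDimensional ℝ H]
    (U : Set H) (hUo : IsOpen U) (hUc : Convex ℝ U)
    (A : H → ℝ) (hAconv : ConvexOn ℝ U A)
    (gA : H → H) (hgA : ∀ θ ∈ U, HasGradientAt A (gA θ) θ)
    (dA : H → H → ℝ) (hdA : ∀ θ θ', dA θ θ' = A θ - A θ' - ⟪gA θ', θ - θ'⟫)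
    (hstrict : StrictConvexOn ℝ U A)
    (C : Set H) (hC : IsCompact C) (hCU : C ⊆ U)
    (θ θ' : ℕ → H) (hθ : ∀ k, θ k ∈ C) (hθ' : ∀ k, θ' k ∈ C)
    (hcv : Tendsto (fun k => dA (θ k) (θ' k)) atTop (𝓝 0)) :
    Tendsto (fun k => ‖θ k - θ' k‖) atTop (𝓝 0) := by
  -- midpoint membership
  have hmidU : ∀ {x y : H}, x ∈ U → y ∈ U → (1/2 : ℝ) • (x + y) ∈ U := by
    intro x y hx hy
    have := hUc hx hy (by norm_num : (0:ℝ) ≤ 1/2) (by norm_num : (0:ℝ) ≤ 1/2) (by norm_num)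
    convert this using 1
    module
  -- the midpoint gap function
  set m : H × H → ℝ := fun p => A p.1 + A p.2 - 2 * A ((1/2 : ℝ) • (p.1 + p.2)) with hm
  -- m is nonneg on U × U
  have hm_nonneg : ∀ {x y : H}, x ∈ U → y ∈ U → 0 ≤ m (x, y) := by
    intro x y hx hy
    have := hAconv.2 hx hy (by norm_num : (0:ℝ) ≤ 1/2) (by norm_num : (0:ℝ) ≤ 1/2) (by norm_num)
    have h2 : (1/2:ℝ) • x + (1/2:ℝ) • y = (1/2:ℝ) • (x + y) := by module
    rw [h2] at this
    simp only [smul_eq_mul] at this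
    simp only [hm]
    nlinarith [this]
  -- m is positive on U × U off the diagonal
  have hm_pos : ∀ {x y : H}, x ∈ U → y ∈ U → x ≠ y → 0 < m (x, y) := by
    intro x y hx hy hne
    have := hstrict.2 hx hy hne (by norm_num : (0:ℝ) < 1/2) (by norm_num : (0:ℝ) < 1/2)
      (by norm_num)
    have h2 : (1/2:ℝ) • x + (1/2:ℝ) • y = (1/2:ℝ) • (x + y) := by module
    rw [h2] at this
    simp only [hm, smul_eq_mul] at this ⊢
    nlinarith [this]
  -- m is dominated by dA on U × U
  have hm_le : ∀ {x y : H}, x ∈ U → y ∈ U → m (x, y) ≤ dA x y := by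
    intro x y hx hy
    have key := grad_midpoint_ineq U hUc A hAconv gA hgA hy hx
    have hsym : (1/2:ℝ) • (y + x) = (1/2:ℝ) • (x + y) := by rw [add_comm]
    rw [hsym] at key
    rw [hdA]
    simp only [hm]
    linarith [key]
  -- continuity of m on C ×ˢ C
  have hAc : ContinuousOn A U := hAconv.continuousOn hUo
  have hm_cont : ContinuousOn m (C ×ˢ C) := by
    have h1 : ContinuousOn (fun p : H × H => A p.1) (C ×ˢ C) :=
      hAc.comp continuous_fst.continuousOn (fun p hp => hCU hp.1)
    have h2 : ContinuousOn (fun p : H × H => A p.2) (C ×ˢ C) :=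
      hAc.comp continuous_snd.continuousOn (fun p hp => hCU hp.2)
    have h3 : ContinuousOn (fun p : H × H => A ((1/2 : ℝ) • (p.1 + p.2))) (C ×ˢ C) :=
      hAc.comp ((continuous_fst.add continuous_snd).const_smul _).continuousOn
        (fun p hp => hmidU (hCU hp.1) (hCU hp.2))
    exact (h1.add h2).sub (continuousOn_const.mul h3)
  -- squeeze: m along the sequences tends to 0
  have hmseq : Tendsto (fun k => m (θ k, θ' k)) atTop (𝓝 0) := by
    refine tendsto_of_tendsto_of_tendsto_of_le_of_le tendsto_const_nhds hcv ?_ ?_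
    · intro k; exact hm_nonneg (hCU (hθ k)) (hCU (hθ' k))
    · intro k; exact hm_le (hCU (hθ k)) (hCU (hθ' k))
  -- conclude via compactness
  rw [Metric.tendsto_atTop]
  intro ε hε
  set K : Set (H × H) := (C ×ˢ C) ∩ {p | ε ≤ ‖p.1 - p.2‖} with hK
  have hKcomp : IsCompact K := (hC.prod hC).inter_right
    (isClosed_le continuous_const (continuous_fst.sub continuous_snd).norm)
  rcases K.eq_empty_or_nonempty with hKe | hKne
  · refine ⟨0, fun n _ => ?_⟩
    rw [Real.dist_eq, sub_zero, abs_norm]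
    by_contra h
    push_neg at h
    exact Set.eq_empty_iff_forall_notMem.mp hKe (θ n, θ' n)
      ⟨⟨hθ n, hθ' n⟩, h⟩
  · obtain ⟨p₀, hp₀K, hp₀min⟩ := hKcomp.exists_isMinOn hKne
      (hm_cont.mono (Set.inter_subset_left))
    have hp₀ne : p₀.1 ≠ p₀.2 := by
      intro h
      have := hp₀K.2
      simp only [Set.mem_setOf_eq, h, sub_self, norm_zero] at this
      linarith
    have hmin_pos : 0 < m p₀ := hm_pos (hCU hp₀K.1.1) (hCU hp₀K.1.2) hp₀ne
    have hev : ∀ᶠ k in atTop, m (θ k, θ' k) < m p₀ := by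
      have := hmseq.eventually (eventually_lt_nhds hmin_pos)
      simpa using this
    obtain ⟨N, hN⟩ := eventually_atTop.mp hev
    refine ⟨N, fun n hn => ?_⟩
    rw [Real.dist_eq, sub_zero, abs_norm]
    by_contra h
    push_neg at h
    have hnK : (θ n, θ' n) ∈ K := ⟨⟨hθ n, hθ' n⟩, h⟩
    have := hp₀min hnK
    have := hN n hn
    simp only [Set.mem_setOf_eq] at *
    linarith [hp₀min hnK]
end

section
/- (Monotone decrease and stalling.) Let F = f + r. Then: (i) for every k, F(θ_{k+1}) ≤ F(θ_k); (ii) if moreover A is strictly convex on U and F(θ_{K+1}) = F(θ_K) for some index K, then θ_{K+1} = θ_K. -/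
open scoped RealInnerProductSpace

lemma grad_le_aux {H : Type*} [NormedAddCommGroup H] [InnerProductSpace ℝ H] [CompleteSpace H]
    {U : Set H} {φ : H → ℝ} (hφ : ConvexOn ℝ U φ)
    {x y : H} (hx : x ∈ U) (hy : y ∈ U) {g : H} (hg : HasGradientAt φ g x) :
    φ x + ⟪g, y - x⟫ ≤ φ y := by
  set L : ℝ →ᵃ[ℝ] H := AffineMap.lineMap x y with hL
  have hψ : ConvexOn ℝ (L ⁻¹' U) (φ ∘ L) := hφ.comp_affineMap L
  have h0 : (0:ℝ) ∈ L ⁻¹' U := by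
    simp [hL, Set.mem_preimage, AffineMap.lineMap_apply_zero, hx]
  have h1 : (1:ℝ) ∈ L ⁻¹' U := by
    simp [hL, Set.mem_preimage, AffineMap.lineMap_apply_one, hy]
  have hc : HasDerivAt (fun t : ℝ => L t) (y - x) 0 := by
    have : HasDerivAt (fun t : ℝ => t • (y - x) + x) ((1:ℝ) • (y - x)) 0 :=
      ((hasDerivAt_id (0:ℝ)).smul_const (y - x)).add_const x
    simpa [hL, AffineMap.lineMap_apply_module'] using this
  have hd : HasDerivAt (φ ∘ L) ⟪g, y - x⟫ 0 := by
    have hx0 : (L 0 : H) = x := by simp [hL]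
    have := (hx0 ▸ hg.hasFDerivAt).comp_hasDerivAt 0 hc
    simpa [InnerProductSpace.toDual_apply_apply] using this
  have := hψ.le_slope_of_hasDerivAt h0 h1 one_pos hd
  rw [slope_def_field] at this
  simp only [Function.comp, hL, AffineMap.lineMap_apply_zero, AffineMap.lineMap_apply_one] at this
  have h2 : ⟪g, y - x⟫ ≤ φ y - φ x := by
    field_simp at this; linarith
  linarith

/-- Monotone decrease and stalling for the Bregman proximal-gradient sequence:
(i) `F(θ_{k+1}) ≤ F(θ_k)` for every `k`, and (ii) if `A` is strictly convex on `U` and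
`F(θ_{K+1}) = F(θ_K)` for some `K`, then `θ_{K+1} = θ_K`, where `F = f + r`. -/
theorem statement17
    {H : Type*} [NormedAddCommGroup H] [InnerProductSpace ℝ H] [FiniteDimensional ℝ H]
    (U : Set H) (hUo : IsOpen U) (hUc : Convex ℝ U)
    (A : H → ℝ) (hAconv : ConvexOn ℝ U A)
    (gA : H → H) (hgA : ∀ θ ∈ U, HasGradientAt A (gA θ) θ)
    (dA : H → H → ℝ) (hdA : ∀ θ θ', dA θ θ' = A θ - A θ' - ⟪gA θ', θ - θ'⟫)
    (f : H → ℝ) (gf : H → H) (hgf : ∀ θ ∈ U, HasGradientAt f (gf θ) θ)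
    (hrel : ConvexOn ℝ U (fun θ => A θ - f θ))
    (r : H → ℝ) (hr : ConvexOn ℝ Set.univ r)
    (τ : ℕ → ℝ) (hτ : ∀ k, τ k ∈ Set.Ioc (0:ℝ) 1)
    (θ : ℕ → H) (hθU : ∀ k, θ k ∈ U)
    (hmin : ∀ k, ∀ θ' ∈ U,
      r (θ (k+1)) + ⟪gf (θ k), θ (k+1) - θ k⟫ + (1/τ (k+1)) * dA (θ (k+1)) (θ k) ≤
      r θ' + ⟪gf (θ k), θ' - θ k⟫ + (1/τ (k+1)) * dA θ' (θ k)) :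
    (∀ k, f (θ (k+1)) + r (θ (k+1)) ≤ f (θ k) + r (θ k)) ∧
    (StrictConvexOn ℝ U A →
      ∀ K, f (θ (K+1)) + r (θ (K+1)) = f (θ K) + r (θ K) → θ (K+1) = θ K) := by
  -- basic step-size facts
  have hτ1 : ∀ k, (1:ℝ) ≤ 1 / τ (k+1) := fun k =>
    (le_div_iff₀ (hτ (k+1)).1).2 (by simpa using (hτ (k+1)).2)
  have hτ0 : ∀ k, (0:ℝ) < 1 / τ (k+1) := fun k => lt_of_lt_of_le one_pos (hτ1 k)
  -- d_A ≥ 0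
  have hdApos : ∀ k, 0 ≤ dA (θ (k+1)) (θ k) := fun k => by
    have := grad_le_aux hAconv (hθU k) (hθU (k+1)) (hgA _ (hθU k))
    rw [hdA]; linarith
  -- relative smoothness: f(θ_{k+1}) ≤ f(θ_k) + ⟪∇f(θ_k), Δ⟫ + d_A(θ_{k+1}, θ_k)
  have hsmooth : ∀ k, f (θ (k+1)) ≤ f (θ k) + ⟪gf (θ k), θ (k+1) - θ k⟫ + dA (θ (k+1)) (θ k) := by
    intro k
    have hgr : HasGradientAt (fun θ' => A θ' - f θ') (gA (θ k) - gf (θ k)) (θ k) := by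
      rw [hasGradientAt_iff_hasFDerivAt, map_sub]
      exact (hgA _ (hθU k)).hasFDerivAt.sub (hgf _ (hθU k)).hasFDerivAt
    have h1 := grad_le_aux hrel (hθU k) (hθU (k+1)) hgr
    rw [inner_sub_left] at h1
    have h2 := hdA (θ (k+1)) (θ k)
    linarith
  -- minimality against θ' = θ_k
  have hM : ∀ k, r (θ (k+1)) + ⟪gf (θ k), θ (k+1) - θ k⟫ +
      (1/τ (k+1)) * dA (θ (k+1)) (θ k) ≤ r (θ k) := by
    intro k
    have hz : dA (θ k) (θ k) = 0 := by rw [hdA]; simp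
    have := hmin k (θ k) (hθU k)
    rw [hz] at this
    simpa using this
  -- part (i)
  have hdec : ∀ k, f (θ (k+1)) + r (θ (k+1)) ≤ f (θ k) + r (θ k) := by
    intro k
    have h1 := hsmooth k
    have h2 := hM k
    have h3 : 0 ≤ (1/τ (k+1) - 1) * dA (θ (k+1)) (θ k) :=
      mul_nonneg (by linarith [hτ1 k]) (hdApos k)
    have h4 : (1/τ (k+1)) * dA (θ (k+1)) (θ k) - dA (θ (k+1)) (θ k)
        = (1/τ (k+1) - 1) * dA (θ (k+1)) (θ k) := by ring
    linarith
  refine ⟨hdec, ?_⟩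
  intro hsc K heq
  by_contra hne
  set a := θ (K+1) with ha
  set b := θ K with hb
  set c : ℝ := 1/τ (K+1) with hc
  -- the minimality inequality against θ_K is tight
  have hMe : r a + ⟪gf b, a - b⟫ + c * dA a b = r b := by
    refine le_antisymm (hM K) ?_
    have h1 := hsmooth K
    have h3 : 0 ≤ (c - 1) * dA a b := mul_nonneg (by linarith [hτ1 K]) (hdApos K)
    have h4 : c * dA a b - dA a b = (c - 1) * dA a b := by ring
    linarith
  -- midpoint
  set m : H := (1/2 : ℝ) • a + (1/2 : ℝ) • b with hm
  have hmU : m ∈ U := hUc (hθU (K+1)) (hθU K) (by norm_num) (by norm_num) (by norm_num)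
  have hrm : r m ≤ (1/2) * r a + (1/2) * r b := by
    have := hr.2 (Set.mem_univ a) (Set.mem_univ b)
      (by norm_num : (0:ℝ) ≤ 1/2) (by norm_num : (0:ℝ) ≤ 1/2) (by norm_num : (1:ℝ)/2 + 1/2 = 1)
    simpa [hm, smul_eq_mul, one_div] using this
  have hAm : A m < (1/2) * A a + (1/2) * A b := by
    have := hsc.2 (hθU (K+1)) (hθU K) hne (by norm_num : (0:ℝ) < 1/2)
      (by norm_num : (0:ℝ) < 1/2) (by norm_num : (1:ℝ)/2 + 1/2 = 1)
    simpa [hm, smul_eq_mul, one_div] using this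
  have hmb : m - b = (1/2 : ℝ) • (a - b) := by
    rw [hm]; module
  have hinner1 : ⟪gf b, m - b⟫ = (1/2) * ⟪gf b, a - b⟫ := by
    rw [hmb, real_inner_smul_right]
  have hinner2 : ⟪gA b, m - b⟫ = (1/2) * ⟪gA b, a - b⟫ := by
    rw [hmb, real_inner_smul_right]
  -- d_A at the midpoint
  have hdm : dA m b < (1/2) * dA a b := by
    rw [hdA, hdA, hinner2]; linarith
  have hcpos : 0 < c := hτ0 K
  have hdm' : c * dA m b < c * ((1/2) * dA a b) := by
    exact mul_lt_mul_of_pos_left hdm hcpos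
  have hGm : r m + ⟪gf b, m - b⟫ + c * dA m b < r b := by
    rw [hinner1]
    nlinarith [hMe, hrm, hdm']
  have hGa := hmin K m hmU
  rw [← ha, ← hb, ← hc, hMe] at hGa
  linarith
end

section
/- (Finite length and iteration complexity.) Let F = f + r and assume F is bounded below on U by v ∈ ℝ. Then: (i) for every K, Σ_{k=0}^{K−1} d_A(θ_k, θ_{k+1}) ≤ F(θ_0) − v, so the series Σ_k d_A(θ_k, θ_{k+1}) converges; (ii) for every ε > 0 and every K, if d_A(θ_k, θ_{k+1}) > ε for all k < K, then K ≤ (F(θ_0) − v)/ε. -/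
/-!
Testing the first-order optimality condition of the proximal step at `θ (k+1)` against `θ k`,
and bounding `d_f ≤ d_A` by convexity of `A - f`, gives
`d_A(θ_k, θ_{k+1}) ≤ F(θ_k) - F(θ_{k+1})`, because `1/τ ≥ 1` and `d_A ≥ 0`. The sum therefore
telescopes to at most `F(θ_0) - F(θ_K) ≤ F(θ_0) - v`; a series of nonnegative terms with bounded
partial sums converges, and `K` terms each larger than `ε` sum to more than `K ε`.
-/

open Set

open scoped RealInnerProductSpace

theorem IsMinOn.sub_le_hasFDerivAt_of_convexOn_add {E : Type*} [NormedAddCommGroup E]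
    [NormedSpace ℝ E] {s : Set E} {ψ φ : E → ℝ} {φ' : E →L[ℝ] ℝ} {x y : E}
    (hmin : IsMinOn (ψ + φ) s y) (hψ : ConvexOn ℝ s ψ) (hφ : HasFDerivAt φ φ' y)
    (hx : x ∈ s) (hy : y ∈ s) : ψ y - ψ x ≤ φ' (x - y) := by
  -- Below its chord on `[y, x]`, `ψ` can be traded for an affine function of `t`, and then
  -- `t = 0` minimizes a differentiable function on `[0, 1]`.
  set g : ℝ → ℝ := fun t => φ (y + t • (x - y)) + (ψ y + t * (ψ x - ψ y))
  have hg : IsMinOn g (Icc 0 1) 0 := by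
    intro t ⟨ht₀, ht₁⟩
    have hz : y + t • (x - y) = (1 - t) • y + t • x := by module
    have hchord := hψ.2 hy hx (by linarith : (0 : ℝ) ≤ 1 - t) ht₀ (by ring)
    have hmin_z := hmin (hz ▸ hψ.1 hy hx (by linarith) ht₀ (by ring))
    simp only [mem_ofPred_eq, Pi.add_apply, hz] at hmin_z
    simp only [smul_eq_mul] at hchord
    simp only [mem_ofPred_eq, g, zero_smul, add_zero, zero_mul, hz]
    linarith
  have hline : HasDerivAt (fun t : ℝ => y + t • (x - y)) (x - y) 0 := by
    simpa using ((hasDerivAt_id (0 : ℝ)).smul_const (x - y)).const_add y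
  have hderiv : HasDerivAt g (φ' (x - y) + (ψ x - ψ y)) 0 :=
    ((by simpa using hφ : HasFDerivAt φ φ' (y + (0 : ℝ) • (x - y))).comp_hasDerivAt 0 hline).add
      ((hasDerivAt_mul_const (ψ x - ψ y)).const_add (ψ y))
  have := hg.localize.hasFDerivWithinAt_nonneg hderiv.hasFDerivAt.hasFDerivWithinAt
    (mem_posTangentConeAt_of_segment_subset (y := 1) (by simp [segment_eq_Icc]))
  rw [ContinuousLinearMap.toSpanSingleton_apply, one_smul] at this
  linarith

theorem ConvexOn.le_sub_of_hasFDerivAt {E : Type*} [NormedAddCommGroup E]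
    [NormedSpace ℝ E] {s : Set E} {φ : E → ℝ} {φ' : E →L[ℝ] ℝ} {x y : E}
    (hφ : ConvexOn ℝ s φ) (hφ' : HasFDerivAt φ φ' x) (hx : x ∈ s) (hy : y ∈ s) :
    φ' (y - x) ≤ φ y - φ x := by
  -- `x` trivially minimizes `φ + (-φ) = 0`.
  have hmin : IsMinOn (φ + -φ) s x := fun z _ => by simp
  have := hmin.sub_le_hasFDerivAt_of_convexOn_add hφ hφ'.neg hy hx
  simp only [neg_apply] at this
  linarith

section Bregman

variable {H : Type*} [NormedAddCommGroup H] [InnerProductSpace ℝ H]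

def bregmanDiv (A : H → ℝ) (gA : H → H) (θ θ' : H) : ℝ := A θ - A θ' - ⟪gA θ', θ - θ'⟫

variable [CompleteSpace H] {U : Set H} {A f r : H → ℝ} {gA gf : H → H} {x y : H}

theorem bregmanDiv_nonneg (hA : ConvexOn ℝ U A) (hgA : HasGradientAt A (gA y) y)
    (hx : x ∈ U) (hy : y ∈ U) : 0 ≤ bregmanDiv A gA x y := by
  have := hA.le_sub_of_hasFDerivAt hgA.hasFDerivAt hy hx
  rw [InnerProductSpace.toDual_apply_apply] at this
  rw [bregmanDiv]
  linarith

theorem bregmanDiv_le_bregmanDiv_of_convexOn_sub (hAf : ConvexOn ℝ U (fun θ => A θ - f θ))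
    (hgA : HasGradientAt A (gA x) x) (hgf : HasGradientAt f (gf x) x) (hx : x ∈ U)
    (hy : y ∈ U) : bregmanDiv f gf y x ≤ bregmanDiv A gA y x := by
  have hgAf : HasGradientAt (fun θ => A θ - f θ) ((gA - gf) x) x := by
    rw [hasGradientAt_iff_hasFDerivAt, Pi.sub_apply, map_sub]
    exact hgA.hasFDerivAt.sub hgf.hasFDerivAt
  have := bregmanDiv_nonneg hAf hgAf hy hx
  simp only [bregmanDiv, Pi.sub_apply, inner_sub_left] at this ⊢
  linarith

theorem bregmanProx_optimality {g : H} {c : ℝ} (hr : ConvexOn ℝ U r)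
    (hgA : HasGradientAt A (gA y) y)
    (hmin : IsMinOn (fun z => r z + ⟪g, z - x⟫ + c * bregmanDiv A gA z x) U y)
    (hx : x ∈ U) (hy : y ∈ U) :
    r y + ⟪g, y - x⟫ + c * (bregmanDiv A gA x y + bregmanDiv A gA y x) ≤ r x := by
  have hlin (a : H) : HasFDerivAt (fun z => ⟪a, z - x⟫) (innerSL ℝ a) y := by
    simpa [Function.comp_def] using
      (innerSL ℝ a).hasFDerivAt.comp y ((hasFDerivAt_id y).sub_const x)
  have hφ := (hlin g).add (((hgA.hasFDerivAt.sub_const (A x)).sub (hlin (gA x))).const_mul c)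
  have hmin' : IsMinOn (r + fun z => ⟪g, z - x⟫ + c * bregmanDiv A gA z x) U y :=
    fun z hz => by simpa only [mem_ofPred_eq, Pi.add_apply, add_assoc] using hmin hz
  have := hmin'.sub_le_hasFDerivAt_of_convexOn_add hr hφ hx hy
  simp only [add_apply, coe_innerSL_apply, smul_apply, sub_apply,
    InnerProductSpace.toDual_apply_apply, smul_eq_mul] at this
  simp only [bregmanDiv, inner_sub_right] at this ⊢
  linarith

theorem bregmanProx_sufficient_decrease {c : ℝ} (hA : ConvexOn ℝ U A)
    (hAf : ConvexOn ℝ U (fun θ => A θ - f θ)) (hr : ConvexOn ℝ U r)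
    (hgA : ∀ θ ∈ U, HasGradientAt A (gA θ) θ) (hgf : HasGradientAt f (gf x) x) (hc : 1 ≤ c)
    (hmin : IsMinOn (fun z => r z + ⟪gf x, z - x⟫ + c * bregmanDiv A gA z x) U y)
    (hx : x ∈ U) (hy : y ∈ U) :
    bregmanDiv A gA x y ≤ (f x + r x) - (f y + r y) := by
  have hopt := bregmanProx_optimality hr (hgA y hy) hmin hx hy
  have hdescent := bregmanDiv_le_bregmanDiv_of_convexOn_sub hAf (hgA x hx) hgf hx hy
  have hxy := bregmanDiv_nonneg hA (hgA y hy) hx hy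
  have hyx := bregmanDiv_nonneg hA (hgA x hx) hy hx
  rw [bregmanDiv] at hdescent
  nlinarith

end Bregman

theorem sum_range_le_sub_of_le_sub_succ {a F : ℕ → ℝ} {v : ℝ} (ha : ∀ k, a k ≤ F k - F (k + 1))
    (hv : ∀ k, v ≤ F k) (K : ℕ) : ∑ k ∈ Finset.range K, a k ≤ F 0 - v :=
  calc ∑ k ∈ Finset.range K, a k ≤ ∑ k ∈ Finset.range K, (F k - F (k + 1)) :=
        Finset.sum_le_sum fun k _ => ha k
    _ = F 0 - F K := Finset.sum_range_sub' F K
    _ ≤ F 0 - v := by linarith [hv K]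

theorem natCast_le_div_of_lt_of_sum_range_le {a : ℕ → ℝ} {ε B : ℝ} {K : ℕ} (hε : 0 < ε)
    (ha : ∀ k < K, ε < a k) (hB : ∑ k ∈ Finset.range K, a k ≤ B) : (K : ℝ) ≤ B / ε := by
  rw [le_div_iff₀ hε]
  calc (K : ℝ) * ε = ∑ _k ∈ Finset.range K, ε := by simp
    _ ≤ ∑ k ∈ Finset.range K, a k :=
        Finset.sum_le_sum fun k hk => (ha k (Finset.mem_range.1 hk)).le
    _ ≤ B := hB

theorem statement18_general
    {H : Type*} [NormedAddCommGroup H] [InnerProductSpace ℝ H] [FiniteDimensional ℝ H]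
    (U : Set H)
    (A : H → ℝ) (hAconv : ConvexOn ℝ U A)
    (gA : H → H) (hgA : ∀ θ ∈ U, HasGradientAt A (gA θ) θ)
    (dA : H → H → ℝ) (hdA : ∀ θ θ', dA θ θ' = A θ - A θ' - ⟪gA θ', θ - θ'⟫)
    (f : H → ℝ) (gf : H → H) (hgf : ∀ θ ∈ U, HasGradientAt f (gf θ) θ)
    (hrel : ConvexOn ℝ U (fun θ => A θ - f θ))
    (r : H → ℝ) (hr : ConvexOn ℝ Set.univ r)
    (τ : ℕ → ℝ) (hτ : ∀ k, τ k ∈ Set.Ioc (0:ℝ) 1)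
    (θ : ℕ → H) (hθU : ∀ k, θ k ∈ U)
    (hmin : ∀ k, ∀ θ' ∈ U,
      r (θ (k+1)) + ⟪gf (θ k), θ (k+1) - θ k⟫ + (1/τ (k+1)) * dA (θ (k+1)) (θ k) ≤
      r θ' + ⟪gf (θ k), θ' - θ k⟫ + (1/τ (k+1)) * dA θ' (θ k))
    (v : ℝ) (hv : ∀ θ' ∈ U, v ≤ f θ' + r θ') :
    ((∀ K : ℕ, ∑ k ∈ Finset.range K, dA (θ k) (θ (k+1)) ≤ (f (θ 0) + r (θ 0)) - v) ∧
      Summable (fun k => dA (θ k) (θ (k+1)))) ∧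
    (∀ ε : ℝ, 0 < ε → ∀ K : ℕ,
      (∀ k < K, ε < dA (θ k) (θ (k+1))) → (K : ℝ) ≤ ((f (θ 0) + r (θ 0)) - v) / ε) := by
  obtain rfl : dA = bregmanDiv A gA := funext₂ hdA
  have hrU : ConvexOn ℝ U r := hr.subset (subset_univ U) hAconv.1
  have hdecrease (k : ℕ) := bregmanProx_sufficient_decrease hAconv hrel hrU hgA
    (hgf _ (hθU k)) (one_le_one_div (hτ (k + 1)).1 (hτ (k + 1)).2) (hmin k) (hθU k) (hθU (k + 1))
  have hsum := sum_range_le_sub_of_le_sub_succ hdecrease (fun k => hv _ (hθU k))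
  have hnonneg (k : ℕ) := bregmanDiv_nonneg hAconv (hgA _ (hθU (k + 1))) (hθU k) (hθU (k + 1))
  exact ⟨⟨hsum, summable_of_sum_range_le hnonneg hsum⟩,
    fun ε hε K hK => natCast_le_div_of_lt_of_sum_range_le hε hK (hsum K)⟩

/-- Finite length and iteration complexity for the Bregman proximal-gradient sequence:
if `F = f + r` is bounded below on `U` by `v`, then (i) the partial sums
`Σ_{k<K} d_A(θ_k, θ_{k+1})` are bounded by `F(θ_0) - v` and the series converges, and
(ii) if `d_A(θ_k, θ_{k+1}) > ε` for all `k < K` then `K ≤ (F(θ_0) - v)/ε`. -/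
theorem statement18
    {H : Type*} [NormedAddCommGroup H] [InnerProductSpace ℝ H] [FiniteDimensional ℝ H]
    (U : Set H) (hUo : IsOpen U) (hUc : Convex ℝ U)
    (A : H → ℝ) (hAconv : ConvexOn ℝ U A)
    (gA : H → H) (hgA : ∀ θ ∈ U, HasGradientAt A (gA θ) θ)
    (dA : H → H → ℝ) (hdA : ∀ θ θ', dA θ θ' = A θ - A θ' - ⟪gA θ', θ - θ'⟫)
    (f : H → ℝ) (gf : H → H) (hgf : ∀ θ ∈ U, HasGradientAt f (gf θ) θ)
    (hrel : ConvexOn ℝ U (fun θ => A θ - f θ))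
    (r : H → ℝ) (hr : ConvexOn ℝ Set.univ r)
    (τ : ℕ → ℝ) (hτ : ∀ k, τ k ∈ Set.Ioc (0:ℝ) 1)
    (θ : ℕ → H) (hθU : ∀ k, θ k ∈ U)
    (hmin : ∀ k, ∀ θ' ∈ U,
      r (θ (k+1)) + ⟪gf (θ k), θ (k+1) - θ k⟫ + (1/τ (k+1)) * dA (θ (k+1)) (θ k) ≤
      r θ' + ⟪gf (θ k), θ' - θ k⟫ + (1/τ (k+1)) * dA θ' (θ k))
    (v : ℝ) (hv : ∀ θ' ∈ U, v ≤ f θ' + r θ') :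
    ((∀ K : ℕ, ∑ k ∈ Finset.range K, dA (θ k) (θ (k+1)) ≤ (f (θ 0) + r (θ 0)) - v) ∧
      Summable (fun k => dA (θ k) (θ (k+1)))) ∧
    (∀ ε : ℝ, 0 < ε → ∀ K : ℕ,
      (∀ k < K, ε < dA (θ k) (θ (k+1))) → (K : ℝ) ≤ ((f (θ 0) + r (θ 0)) - v) / ε) :=
  statement18_general U A hAconv gA hgA dA hdA f gf hgf hrel r hr τ hτ θ hθU hmin v hv
end
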